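/- arXiv:2603.00899 — 6 statements merged into one kernel-verified Lean document; each statement's English description precedes it below -/
import Mathlib

section
/- Let (G,i) be a rooted graph on a finite vertex set V and let k, ℓ ≥ 0 be integers. If there exists a matrix A ∈ S(G) with null(A) = k+1 and null(A(i)) = ℓ+1, then there exists a matrix A' ∈ S(G) with null(A') = k and null(A'(i)) = ℓ. (In fact A' can be taken of the form A + E_{j,j} for a suitable vertex j ≠ i, where E_{j,j} has a single nonzero entry 1 in position (j,j).) -/
/-!
Adding `c E_jj` (`c ≠ 0`) to a symmetric `B` cuts its kernel down to `{x ∈ ker B | x_j = 0}`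
as soon as some kernel vector of `B` is nonzero at `j`, so the nullity drops by exactly one.
It therefore suffices to find `j ≠ i` at which both `ker A` and `ker A(i)` contain a vector
that is nonzero at `j`. Extend a nonzero `y ∈ ker A(i)` by zero to `Y`; then `A Y` is supported
on `{i}`. If `(A Y)_i = 0`, then `Y ∈ ker A` and any `j` in the support of `y` works. Otherwise
`x_i (A Y)_i = Y ⬝ A x = 0` for `x ∈ ker A`, so every kernel vector of `A` vanishes at `i` and
restricts to a kernel vector of `A(i)`; any `j` in the support of a nonzero one works.
-/

open Matrix

variable {V : Type*} [Fintype V] [DecidableEq V]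

/-- The nullity of a real matrix: the dimension of its kernel. -/
noncomputable def nullity (A : Matrix V V ℝ) : ℕ :=
  Module.finrank ℝ (LinearMap.ker A.mulVecLin)

/-- `delRC A i` is the principal submatrix of `A` obtained by deleting row and column `i`. -/
def delRC (A : Matrix V V ℝ) (i : V) : Matrix {j // j ≠ i} {j // j ≠ i} ℝ :=
  A.submatrix Subtype.val Subtype.val

/-- `A ∈ S(G)`: `A` is symmetric and its off-diagonal entries are nonzero precisely at edges. -/
def InS (G : SimpleGraph V) (A : Matrix V V ℝ) : Prop :=
  A.IsSymm ∧ ∀ j k : V, j ≠ k → (A j k ≠ 0 ↔ G.Adj j k)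

/-- The i-strong nullity interlacing property. -/
def HasSNIP (A : Matrix V V ℝ) (i : V) : Prop :=
  ∀ X : Matrix V V ℝ, X.IsSymm → (∀ j k, A j k * X j k = 0) → (∀ j, X j j = 0) →
    (∀ j k, j ≠ i → (A * X) j k = 0) → X = 0

/-- The Strong Arnold Property. -/
def HasSAP (A : Matrix V V ℝ) : Prop :=
  ∀ X : Matrix V V ℝ, X.IsSymm → (∀ j k, A j k * X j k = 0) → (∀ j, X j j = 0) →
    A * X = 0 → X = 0

/-- The parameter ξξ(G,i): the maximum of k+ℓ over pairs k ≤ ℓ such that (G,i)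
allows the nullity pair (k,ℓ) with i-SNIP. -/
noncomputable def xixi (G : SimpleGraph V) (i : V) : ℕ :=
  sSup {s | ∃ k ℓ : ℕ, k ≤ ℓ ∧ s = k + ℓ ∧ ∃ A : Matrix V V ℝ,
    InS G A ∧ HasSNIP A i ∧ nullity A = k ∧ nullity (delRC A i) = ℓ}

section Field

variable {K : Type*} [Field K] {W : Type*} [Fintype W]

theorem Matrix.IsSymm.dotProduct_mulVec_comm {B : Matrix W W K} (hB : B.IsSymm) (v w : W → K) :
    v ⬝ᵥ (B *ᵥ w) = (B *ᵥ v) ⬝ᵥ w := by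
  rw [dotProduct_mulVec, ← hB.eq, vecMul_transpose, hB.eq]

theorem Matrix.single_self_mulVec [DecidableEq W] (j : W) (c : K) (x : W → K) :
    single j j c *ᵥ x = Pi.single j (c * x j) :=
  single_mulVec j j c x

theorem Submodule.finrank_inf_ker_add_one {E : Type*} [AddCommGroup E] [Module K E]
    (p : Submodule K E) [FiniteDimensional K p] (f : E →ₗ[K] K) {y : E} (hy : y ∈ p)
    (hfy : f y ≠ 0) : Module.finrank K ↥(p ⊓ LinearMap.ker f) + 1 = Module.finrank K p := by
  have hsurj : LinearMap.range (f.domRestrict p) = ⊤ := by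
    refine LinearMap.range_eq_top.mpr fun r => ⟨(r / f y) • ⟨y, hy⟩, ?_⟩
    simp [div_mul_cancel₀ _ hfy]
  have hrank := (f.domRestrict p).finrank_range_add_finrank_ker
  rw [hsurj, finrank_top, Module.finrank_self, LinearMap.ker_domRestrict] at hrank
  rw [← Submodule.map_comap_subtype, Submodule.finrank_map_subtype_eq]
  omega

-- Pairing `(B + c E_jj) x = 0` with `y` gives `c y_j x_j = 0`.
theorem Matrix.ker_mulVecLin_add_single_self [DecidableEq W] {B : Matrix W W K} (hB : B.IsSymm)
    {j : W} {c : K} (hc : c ≠ 0) {y : W → K} (hy : B *ᵥ y = 0) (hyj : y j ≠ 0) :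
    LinearMap.ker (B + single j j c).mulVecLin =
      LinearMap.ker B.mulVecLin ⊓ LinearMap.ker (LinearMap.proj j) := by
  ext x
  simp only [Submodule.mem_inf, LinearMap.mem_ker, mulVecLin_apply, LinearMap.proj_apply,
    add_mulVec, single_self_mulVec]
  constructor
  · intro hx
    have hsymm : (B + single j j c).IsSymm := by
      rw [IsSymm, transpose_add, transpose_single, hB.eq]
    have hpair := hsymm.dotProduct_mulVec_comm y x
    rw [add_mulVec, add_mulVec, single_self_mulVec, single_self_mulVec, hx, hy, dotProduct_zero,
      zero_add, single_dotProduct] at hpair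
    have hxj : x j = 0 := by simpa [hc, hyj] using hpair.symm
    simpa [hxj] using hx
  · rintro ⟨hx, hxj⟩
    simp [hx, hxj]

end Field

theorem nullity_add_single_self {W : Type*} [Fintype W] [DecidableEq W] {B : Matrix W W ℝ}
    (hB : B.IsSymm) {j : W} {c : ℝ} (hc : c ≠ 0) {y : W → ℝ} (hy : B *ᵥ y = 0)
    (hyj : y j ≠ 0) : nullity (B + single j j c) + 1 = nullity B := by
  rw [nullity, ker_mulVecLin_add_single_self hB hc hy hyj]
  exact Submodule.finrank_inf_ker_add_one _ _ (y := y) hy hyj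

theorem exists_mulVec_eq_zero_of_nullity_pos {W : Type*} [Fintype W] {B : Matrix W W ℝ}
    (h : 0 < nullity B) : ∃ x, B *ᵥ x = 0 ∧ x ≠ 0 := by
  have := Module.finrank_pos_iff.mp h
  obtain ⟨⟨x, hx⟩, hx0⟩ := exists_ne (0 : LinearMap.ker B.mulVecLin)
  exact ⟨x, hx, fun h => hx0 (Subtype.ext h)⟩

theorem InS.add_single_self {W : Type*} [DecidableEq W] {G : SimpleGraph W} {A : Matrix W W ℝ}
    (hA : InS G A) (j : W) (c : ℝ) : InS G (A + single j j c) := by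
  refine ⟨by rw [IsSymm, transpose_add, transpose_single, hA.1.eq], fun a b hab => ?_⟩
  have hdiag : single j j c a b = 0 :=
    single_apply_of_ne j j c a b fun h => hab (h.1.symm.trans h.2)
  rw [Matrix.add_apply, hdiag, add_zero]
  exact hA.2 a b hab

theorem delRC_add_single_self {U : Type*} [DecidableEq U] (A : Matrix U U ℝ) {i j : U}
    (hj : j ≠ i) (c : ℝ) :
    delRC (A + single j j c) i = delRC A i + single ⟨j, hj⟩ ⟨j, hj⟩ c := by
  ext a b
  simp [delRC, single, Subtype.ext_iff]

theorem delRC_mulVec_apply (A : Matrix V V ℝ) {i : V} {x : V → ℝ} (hx : x i = 0)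
    (m : {v // v ≠ i}) : (delRC A i *ᵥ fun n => x n) m = (A *ᵥ x) m := by
  simp [mulVec, dotProduct, Fintype.sum_eq_add_sum_subtype_ne _ i, hx, delRC]

theorem exists_ne_kernel_vectors_apply_ne_zero {A : Matrix V V ℝ} (hA : A.IsSymm) {i : V}
    {x : V → ℝ} (hx : A *ᵥ x = 0) (hx0 : x ≠ 0) {y : {v // v ≠ i} → ℝ}
    (hy : delRC A i *ᵥ y = 0) (hy0 : y ≠ 0) :
    ∃ (j : V) (hj : j ≠ i), (∃ x', A *ᵥ x' = 0 ∧ x' j ≠ 0) ∧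
      ∃ y', delRC A i *ᵥ y' = 0 ∧ y' ⟨j, hj⟩ ≠ 0 := by
  set Y : V → ℝ := fun v => if h : v = i then 0 else y ⟨v, h⟩
  have hYi : Y i = 0 := dif_pos rfl
  have hYy : (fun n : {v // v ≠ i} => Y n) = y := funext fun n => dif_neg n.2
  have hAY : A *ᵥ Y = Pi.single i ((A *ᵥ Y) i) := by
    funext m
    by_cases hm : m = i
    · subst hm; simp
    · rw [Pi.single_eq_of_ne hm, ← delRC_mulVec_apply A hYi ⟨m, hm⟩, hYy, hy, Pi.zero_apply]
  by_cases hAYi : (A *ᵥ Y) i = 0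
  · obtain ⟨n, hn⟩ := Function.ne_iff.mp hy0
    refine ⟨n, n.2, ⟨Y, by rw [hAY, hAYi, Pi.single_zero], ?_⟩, y, hy, hn⟩
    rwa [← hYy] at hn
  · have hxi : x i = 0 := by
      have hpair := hA.dotProduct_mulVec_comm Y x
      rw [hx, dotProduct_zero, hAY, single_dotProduct] at hpair
      exact (mul_eq_zero.mp hpair.symm).resolve_left hAYi
    obtain ⟨j, hj⟩ := Function.ne_iff.mp hx0
    have hji : j ≠ i := fun h => hj (h ▸ hxi)
    refine ⟨j, hji, ⟨x, hx, hj⟩, fun n => x n, funext fun m => ?_, hj⟩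
    rw [delRC_mulVec_apply A hxi, hx, Pi.zero_apply, Pi.zero_apply]

theorem stmt0 (G : SimpleGraph V) (i : V) (k ℓ : ℕ)
    (A : Matrix V V ℝ) (hA : InS G A)
    (h1 : nullity A = k + 1) (h2 : nullity (delRC A i) = ℓ + 1) :
    ∃ j : V, j ≠ i ∧ InS G (A + Matrix.single j j 1) ∧
      nullity (A + Matrix.single j j 1) = k ∧
      nullity (delRC (A + Matrix.single j j 1) i) = ℓ := by
  obtain ⟨x, hx, hx0⟩ := exists_mulVec_eq_zero_of_nullity_pos (B := A) (by omega)
  obtain ⟨y, hy, hy0⟩ := exists_mulVec_eq_zero_of_nullity_pos (B := delRC A i) (by omega)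
  obtain ⟨j, hj, ⟨x', hx', hx'j⟩, y', hy', hy'j⟩ :=
    exists_ne_kernel_vectors_apply_ne_zero hA.1 hx hx0 hy hy0
  have hA' := nullity_add_single_self hA.1 one_ne_zero hx' hx'j
  have hAi' := nullity_add_single_self (B := delRC A i) (hA.1.submatrix _) one_ne_zero hy' hy'j
  refine ⟨j, hj, hA.add_single_self j 1, by omega, ?_⟩
  rw [delRC_add_single_self A hj]
  omega
end

section
/- (Bifurcation Lemma) Let (G,i) be a rooted graph on a finite vertex set V and let A ∈ S(G) be a matrix with i-SNIP. Then there exists ε > 0 such that for every real symmetric V×V matrix M with |M j k − A j k| < ε for all j,k ∈ V, there exists a matrix A' ∈ S(G) with i-SNIP such that null(A') = null(M) and null(A'(i)) = null(M(i)). -/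
open Matrix

variable {V : Type*} [Fintype V] [DecidableEq V]

/-!
Let `F(B, Z, W) = (1 + Z)ᵀ (A + B) (1 + Z) + (W - Wᵀ)`, where `B` runs over symmetric matrices
supported on the diagonal and the edges of `G`, `Z` over matrices whose `i`-th row vanishes and
`W` over all matrices. Its derivative at `0`, `(B, Z, W) ↦ B + ZᵀA + AZ + (W - Wᵀ)`, is
surjective: a matrix `X` orthogonal to its range for the trace pairing is symmetric, vanishes on
the diagonal and on the edges, and satisfies `(AX) j k = 0` for `j ≠ i`, so `X = 0` by `i`-SNIP.
Hence `F` maps neighbourhoods of `0` onto neighbourhoods of `A`: a symmetric `M` close to `A` is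
`(1 + Z)ᵀ A' (1 + Z)` (the skew part has to vanish) with `A' = A + B` still in `S(G)` and still
with `i`-SNIP, both being open conditions, and with `1 + Z` invertible. As the `i`-th row of
`1 + Z` is the `i`-th unit vector, deleting row and column `i` commutes with this congruence,
so both nullities are preserved.
-/

namespace Matrix

section Mask

variable {m n R : Type*} [Semiring R]

open Classical in
noncomputable def mask (s : m → n → Prop) : Matrix m n R →ₗ[R] Matrix m n R where
  toFun M := of fun p q => if s p q then M p q else 0
  map_add' M N := by ext p q; simp only [of_apply, add_apply]; split_ifs <;> simp
  map_smul' c M := by ext p q; simp only [of_apply, smul_apply]; split_ifs <;> simp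

variable {s : m → n → Prop} {M : Matrix m n R} {p : m} {q : n}

lemma mask_apply_of_pos (h : s p q) : mask s M p q = M p q := by
  simp [mask, h]

lemma mask_apply_of_neg (h : ¬ s p q) : mask s M p q = 0 := by
  simp [mask, h]

lemma mask_eq_zero_iff : mask s M = 0 ↔ ∀ p q, s p q → M p q = 0 := by
  refine ⟨fun h p q hpq => by rw [← mask_apply_of_pos (M := M) hpq, h, zero_apply], fun h => ?_⟩
  ext p q
  by_cases hpq : s p q
  · rw [mask_apply_of_pos hpq, h p q hpq, zero_apply]
  · rw [mask_apply_of_neg hpq, zero_apply]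

lemma mask_single_one [DecidableEq m] [DecidableEq n] (h : s p q) :
    mask s (single p q (1 : R)) = single p q 1 := by
  ext a b
  by_cases hs : s a b
  · rw [mask_apply_of_pos hs]
  · have : ¬ (p = a ∧ q = b) := by rintro ⟨rfl, rfl⟩; exact hs h
    simp [mask_apply_of_neg hs, this]

-- Without the ascription, `*` elaborates to the `CStarMatrix` multiplication and blocks `rw`.
lemma mask_eq_zero_of_forall_trace_transpose_mul [Fintype m] [Fintype n] {Y : Matrix m n R}
    (h : ∀ Z, trace ((mask s Z : Matrix m n R)ᵀ * Y) = 0) : mask s Y = 0 := by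
  classical
  refine mask_eq_zero_iff.2 fun p q hpq => ?_
  have := h (single p q 1)
  rwa [mask_single_one hpq, transpose_single, trace_single_mul, one_smul] at this

end Mask

section TracePairing

variable {m n K : Type*} [Fintype m] [Fintype n] [Field K]

lemma trace_transpose_mul_eq_sum (Y X : Matrix m n K) :
    trace (Yᵀ * X) = ∑ p, ∑ q, Y p q * X p q := by
  simp only [trace, diag_apply, mul_apply, transpose_apply]
  exact Finset.sum_comm

theorem _root_.LinearMap.surjective_of_trace_transpose_mul {E : Type*} [AddCommGroup E]
    [Module K E] (T : E →ₗ[K] Matrix m n K)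
    (h : ∀ X : Matrix m n K, (∀ e, trace ((T e)ᵀ * X) = 0) → X = 0) :
    Function.Surjective T := by
  classical
  rw [← LinearMap.range_eq_top]
  by_contra hT
  obtain ⟨f, hf, hle⟩ := (LinearMap.range T).exists_le_ker_of_lt_top (lt_top_iff_ne_top.2 hT)
  have hfX : ∀ Y, f Y = trace (Yᵀ * of fun p q => f (single p q 1)) := fun Y => by
    conv_lhs => rw [matrix_eq_sum_single Y]
    simp only [map_sum, trace_transpose_mul_eq_sum, of_apply]
    refine Finset.sum_congr rfl fun p _ => Finset.sum_congr rfl fun q _ => ?_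
    rw [← smul_eq_mul, ← map_smul, smul_single, smul_eq_mul, mul_one]
  have hX := h _ fun e => (hfX (T e)).symm.trans (hle ⟨e, rfl⟩)
  exact hf (LinearMap.ext fun Y => by simp [hfX Y, hX])

end TracePairing

section Symmetric

variable {n R : Type*}

lemma IsSymm.eq_of_add_sub_transpose_eq [AddCommGroup R] [IsAddTorsionFree R] {S M W : Matrix n n R}
    (hS : S.IsSymm) (hM : M.IsSymm) (h : S + (W - Wᵀ) = M) : S = M := by
  have h' := congrArg Matrix.transpose h
  rw [transpose_add, transpose_sub, transpose_transpose, hS.eq, hM.eq] at h'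
  have hskew : W - Wᵀ = -(W - Wᵀ) := by rw [neg_sub, eq_sub_of_add_eq' h, eq_sub_of_add_eq' h']
  have hW : W - Wᵀ = 0 := by
    ext p q
    exact self_eq_neg.1 (congrFun (congrFun hskew p) q)
  rwa [hW, add_zero] at h

variable [Fintype n] [CommRing R]

lemma IsSymm.transpose_mul_mul {A : Matrix n n R} (hA : A.IsSymm) (U : Matrix n n R) :
    (Uᵀ * A * U).IsSymm := by
  rw [IsSymm, transpose_mul, transpose_mul, transpose_transpose, hA.eq, Matrix.mul_assoc]

lemma trace_transpose_sub_transpose_mul (W X : Matrix n n R) :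
    trace ((W - Wᵀ)ᵀ * X) = trace (Wᵀ * (X - Xᵀ)) := by
  rw [transpose_sub, transpose_transpose, sub_mul, Matrix.mul_sub, trace_sub, trace_sub,
    ← trace_transpose_mul W]

lemma IsSymm.trace_add_transpose_mul {X : Matrix n n R} (hX : X.IsSymm) (B : Matrix n n R) :
    trace ((B + Bᵀ)ᵀ * X) = 2 * trace (Bᵀ * X) := by
  rw [transpose_add, transpose_transpose, add_mul, trace_add, ← trace_transpose_mul B, hX.eq]
  ring

lemma isSymm_of_forall_trace_sub_transpose_mul {X : Matrix n n R}
    (h : ∀ W, trace ((W - Wᵀ)ᵀ * X) = 0) : X.IsSymm := by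
  refine ext_iff_trace_mul_left.2 fun W => ?_
  have := h Wᵀ
  rw [trace_transpose_sub_transpose_mul, transpose_transpose, Matrix.mul_sub, trace_sub] at this
  exact (sub_eq_zero.1 this).symm

end Symmetric

open scoped Matrix.Norms.Elementwise in
lemma exists_pos_forall_abs_sub_lt_of_eventually {m n : Type*} [Fintype m] [Fintype n]
    {A : Matrix m n ℝ} {P : Matrix m n ℝ → Prop} (h : ∀ᶠ M in nhds A, P M) :
    ∃ ε > 0, ∀ M, (∀ j k, |M j k - A j k| < ε) → P M := by
  obtain ⟨ε, hε, hP⟩ := Metric.eventually_nhds_iff.1 h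
  exact ⟨ε, hε, fun M hM => hP ((dist_eq_norm M A).trans_lt ((norm_lt_iff hε).2 hM))⟩

end Matrix

section Nullity

omit [DecidableEq V] in
lemma nullity_add_rank (A : Matrix V V ℝ) : nullity A + A.rank = Fintype.card V := by
  rw [nullity, rank, add_comm, LinearMap.finrank_range_add_finrank_ker,
    Module.finrank_fintype_fun_eq_card]

lemma nullity_mul_mul_of_isUnit_det {P Q : Matrix V V ℝ} (A : Matrix V V ℝ)
    (hP : IsUnit P.det) (hQ : IsUnit Q.det) : nullity (P * A * Q) = nullity A := by
  have h₁ := nullity_add_rank (P * A * Q)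
  have h₂ := nullity_add_rank A
  rw [rank_mul_eq_left_of_isUnit_det Q _ hQ, rank_mul_eq_right_of_isUnit_det P _ hP] at h₁
  omega

lemma nullity_transpose_mul_mul {U : Matrix V V ℝ} (A : Matrix V V ℝ) (hU : IsUnit U.det) :
    nullity (Uᵀ * A * U) = nullity A :=
  nullity_mul_mul_of_isUnit_det A (by rwa [det_transpose]) hU

lemma delRC_mul {M N : Matrix V V ℝ} {i : V} (h : ∀ p q, p ≠ i → q ≠ i → M p i * N i q = 0) :
    delRC (M * N) i = delRC M i * delRC N i := by
  ext p q
  simp only [delRC, submatrix_apply, mul_apply]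
  rw [Fintype.sum_eq_add_sum_subtype_ne _ i, h p q p.2 q.2, zero_add]

lemma delRC_transpose_mul_mul {U : Matrix V V ℝ} {i : V} (A : Matrix V V ℝ)
    (hU : ∀ q, q ≠ i → U i q = 0) :
    delRC (Uᵀ * A * U) i = (delRC U i)ᵀ * delRC A i * delRC U i := by
  rw [delRC_mul fun p q _ hq => by rw [hU q hq, mul_zero],
    delRC_mul fun p q hp _ => by rw [transpose_apply, hU p hp, zero_mul]]
  rfl

lemma nullity_delRC_transpose_mul_mul {U : Matrix V V ℝ} {i : V} (A : Matrix V V ℝ)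
    (hU : IsUnit (delRC U i).det) (hUi : ∀ q, q ≠ i → U i q = 0) :
    nullity (delRC (Uᵀ * A * U) i) = nullity (delRC A i) := by
  rw [delRC_transpose_mul_mul A hUi]
  exact nullity_transpose_mul_mul _ hU

end Nullity

open scoped Matrix.Norms.Operator Topology

section SNIP

variable (G : SimpleGraph V) (i : V)

def symmOffPattern : Submodule ℝ (Matrix V V ℝ) where
  carrier := {X | X.IsSymm ∧ mask (Relation.ReflGen G.Adj) X = 0}
  add_mem' := fun ⟨hX, hX'⟩ ⟨hY, hY'⟩ => ⟨hX.add hY, by rw [map_add, hX', hY', add_zero]⟩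
  zero_mem' := ⟨isSymm_zero, map_zero _⟩
  smul_mem' c _ := fun ⟨hX, hX'⟩ => ⟨hX.smul c, by rw [map_smul, hX', smul_zero]⟩

omit [Fintype V] [DecidableEq V] in
variable {G} in
lemma mem_symmOffPattern {X : Matrix V V ℝ} :
    X ∈ symmOffPattern G ↔ X.IsSymm ∧ mask (Relation.ReflGen G.Adj) X = 0 :=
  Iff.rfl

noncomputable def snipMap (C : Matrix V V ℝ) : symmOffPattern G →L[ℝ] Matrix V V ℝ :=
  (LinearMap.toContinuousLinearMap (mask fun p _ => p ≠ i) ∘L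
    ContinuousLinearMap.mul ℝ _ C) ∘L (symmOffPattern G).subtypeL

lemma continuous_snipMap : Continuous (snipMap G i) :=
  (continuous_const.clm_comp (ContinuousLinearMap.mul ℝ _).continuous).clm_comp continuous_const

variable {G} {A : Matrix V V ℝ}

omit [Fintype V] in
lemma InS.forall_mul_eq_zero_and_diag_iff (hA : InS G A) {X : Matrix V V ℝ} :
    ((∀ j k, A j k * X j k = 0) ∧ ∀ j, X j j = 0) ↔ mask (Relation.ReflGen G.Adj) X = 0 := by
  rw [mask_eq_zero_iff]
  refine ⟨fun ⟨hAX, hX⟩ j k hjk => ?_, fun h => ⟨fun j k => ?_, fun j => h j j .refl⟩⟩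
  · rcases hjk with _ | hadj
    · exact hX j
    · exact (mul_eq_zero.1 (hAX j k)).resolve_left ((hA.2 j k hadj.ne).2 hadj)
  · by_cases hjk : j = k
    · rw [h j k (hjk ▸ .refl), mul_zero]
    · by_cases hadj : G.Adj j k
      · rw [h j k (.single hadj), mul_zero]
      · rw [not_not.1 fun h => hadj ((hA.2 j k hjk).1 h), zero_mul]

lemma InS.hasSNIP_iff (hA : InS G A) : HasSNIP A i ↔
    ∀ X ∈ symmOffPattern G, mask (fun p _ => p ≠ i) (A * X) = 0 → X = 0 := by
  refine forall_congr' fun X => ?_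
  rw [mem_symmOffPattern, ← hA.forall_mul_eq_zero_and_diag_iff, mask_eq_zero_iff]
  simp only [and_imp]

lemma InS.hasSNIP_iff_injective (hA : InS G A) :
    HasSNIP A i ↔ Function.Injective (snipMap G i A) := by
  rw [hA.hasSNIP_iff, injective_iff_map_eq_zero]
  exact ⟨fun h X hX => Subtype.ext (h X X.2 hX),
    fun h X hX hAX => congrArg Subtype.val (h ⟨X, hX⟩ hAX)⟩

end SNIP

section Congruence

variable {n E : Type*} [Fintype n] [DecidableEq n] [NormedAddCommGroup E] [NormedSpace ℝ E]
  [FiniteDimensional ℝ E]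

lemma exists_hasStrictFDerivAt_congruence (A : Matrix n n ℝ) (Z B W : E →ₗ[ℝ] Matrix n n ℝ) :
    ∃ L : E →L[ℝ] Matrix n n ℝ,
      HasStrictFDerivAt (fun e => (1 + Z e)ᵀ * (A + B e) * (1 + Z e) + W e) L 0 ∧
      ∀ e, L e = (Z e)ᵀ * A + A * Z e + B e + W e := by
  have hZ := (LinearMap.toContinuousLinearMap Z).hasStrictFDerivAt (x := 0) |>.const_add 1
  have hZt := (LinearMap.toContinuousLinearMap
    ((transposeLinearEquiv n n ℝ ℝ).toLinearMap ∘ₗ Z)).hasStrictFDerivAt (x := 0) |>.const_add 1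
  have hB := (LinearMap.toContinuousLinearMap B).hasStrictFDerivAt (x := 0) |>.const_add A
  have hW := (LinearMap.toContinuousLinearMap W).hasStrictFDerivAt (x := 0)
  refine ⟨_, (((hZt.fun_mul' hB).fun_mul' hZ).add hW).congr_of_eventuallyEq ?_, fun e => ?_⟩
  · exact Filter.Eventually.of_forall fun e => by simp [transpose_add]
  · change (1 + (Z 0)ᵀ) * (A + B 0) * Z e + ((1 + (Z 0)ᵀ) * B e + (Z e)ᵀ * (A + B 0)) * (1 + Z 0)
      + W e = _
    simp only [map_zero, transpose_zero, add_zero, one_mul, mul_one]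
    abel

end Congruence

section Bifurcation

variable (G : SimpleGraph V) (i : V)

noncomputable def patternPart : Matrix V V ℝ × Matrix V V ℝ × Matrix V V ℝ →ₗ[ℝ] Matrix V V ℝ :=
  (LinearMap.id + (transposeLinearEquiv V V ℝ ℝ).toLinearMap) ∘ₗ
    mask (Relation.ReflGen G.Adj) ∘ₗ LinearMap.fst ℝ _ _

noncomputable def rowPart : Matrix V V ℝ × Matrix V V ℝ × Matrix V V ℝ →ₗ[ℝ] Matrix V V ℝ :=
  mask (fun p _ => p ≠ i) ∘ₗ LinearMap.fst ℝ _ _ ∘ₗ LinearMap.snd ℝ _ _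

noncomputable def skewPart : Matrix V V ℝ × Matrix V V ℝ × Matrix V V ℝ →ₗ[ℝ] Matrix V V ℝ :=
  (LinearMap.id - (transposeLinearEquiv V V ℝ ℝ).toLinearMap) ∘ₗ
    LinearMap.snd ℝ _ _ ∘ₗ LinearMap.snd ℝ _ _

variable {G i} {A : Matrix V V ℝ}

omit [Fintype V] [DecidableEq V] in
lemma patternPart_apply (d : Matrix V V ℝ × Matrix V V ℝ × Matrix V V ℝ) :
    patternPart G d = mask (Relation.ReflGen G.Adj) d.1 + (mask (Relation.ReflGen G.Adj) d.1)ᵀ :=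
  rfl

omit [Fintype V] [DecidableEq V] in
lemma rowPart_apply (d : Matrix V V ℝ × Matrix V V ℝ × Matrix V V ℝ) :
    rowPart i d = mask (fun p _ => p ≠ i) d.2.1 :=
  rfl

omit [Fintype V] [DecidableEq V] in
lemma skewPart_apply (d : Matrix V V ℝ × Matrix V V ℝ × Matrix V V ℝ) :
    skewPart d = d.2.2 - d.2.2ᵀ :=
  rfl

lemma surjective_of_hasSNIP (hA : InS G A) (hsnip : HasSNIP A i)
    {L : Matrix V V ℝ × Matrix V V ℝ × Matrix V V ℝ →ₗ[ℝ] Matrix V V ℝ}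
    (hL : ∀ d, L d = (rowPart i d)ᵀ * A + A * rowPart i d + patternPart G d + skewPart d) :
    Function.Surjective L := by
  refine L.surjective_of_trace_transpose_mul fun X hX => ?_
  have hX_symm : X.IsSymm := isSymm_of_forall_trace_sub_transpose_mul fun w => by
    simpa [hL, rowPart_apply, patternPart_apply, skewPart_apply] using hX (0, 0, w)
  have hX_pattern : mask (Relation.ReflGen G.Adj) X = 0 :=
    mask_eq_zero_of_forall_trace_transpose_mul fun b => by
      have h := hX (b, 0, 0)
      simp only [hL, rowPart_apply, patternPart_apply, skewPart_apply, map_zero, transpose_zero,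
        zero_mul, Matrix.mul_zero, zero_add, sub_zero, add_zero] at h
      rwa [hX_symm.trace_add_transpose_mul, mul_eq_zero, or_iff_right two_ne_zero] at h
  have hAX_rows : mask (fun p _ => p ≠ i) (A * X) = 0 :=
    mask_eq_zero_of_forall_trace_transpose_mul fun z => by
      have h := hX (0, z, 0)
      simp only [hL, rowPart_apply, patternPart_apply, skewPart_apply, map_zero, transpose_zero,
        add_zero, sub_zero] at h
      rwa [← hA.1.eq, ← transpose_mul, hA.1.eq, add_comm, hX_symm.trace_add_transpose_mul,
        transpose_mul, hA.1.eq, Matrix.mul_assoc, mul_eq_zero, or_iff_right two_ne_zero] at h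
  exact (hA.hasSNIP_iff i).1 hsnip X ⟨hX_symm, hX_pattern⟩ hAX_rows

omit [Fintype V] [DecidableEq V] in
lemma InS.add_patternPart (hA : InS G A) {d : Matrix V V ℝ × Matrix V V ℝ × Matrix V V ℝ}
    (hd : ∀ p q, G.Adj p q → (A + patternPart G d) p q ≠ 0) : InS G (A + patternPart G d) := by
  refine ⟨hA.1.add (isSymm_add_transpose_self _), fun j k hjk => ⟨fun hne => ?_, hd j k⟩⟩
  by_contra hadj
  have hA0 : A j k = 0 := not_not.1 (mt (hA.2 j k hjk).1 hadj)
  have hjk' : ¬ Relation.ReflGen G.Adj j k := by rw [Relation.reflGen_iff]; tauto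
  have hkj' : ¬ Relation.ReflGen G.Adj k j := by rw [Relation.reflGen_iff]; tauto
  exact hne (by rw [Matrix.add_apply, patternPart_apply, Matrix.add_apply, transpose_apply,
    mask_apply_of_neg hjk', mask_apply_of_neg hkj', hA0, add_zero, add_zero])

variable (G) in
omit [DecidableEq V] in
lemma isOpen_setOf_ne_zero_of_adj :
    IsOpen {C : Matrix V V ℝ | ∀ p q, G.Adj p q → C p q ≠ 0} := by
  simp only [Set.ofPred_forall]
  exact isOpen_iInter_of_finite fun p => isOpen_iInter_of_finite fun q =>
    isOpen_iInter_of_finite fun _ => isOpen_ne_fun (by fun_prop) continuous_const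

theorem eventually_exists_bifurcation (hA : InS G A) (hsnip : HasSNIP A i) :
    ∀ᶠ M in 𝓝 A, M.IsSymm → ∃ A' : Matrix V V ℝ, InS G A' ∧ HasSNIP A' i ∧
      nullity A' = nullity M ∧ nullity (delRC A' i) = nullity (delRC M i) := by
  obtain ⟨L, hF, hL⟩ := exists_hasStrictFDerivAt_congruence A (rowPart i) (patternPart G) skewPart
  have hmap := hF.map_nhds_eq_of_surj (LinearMap.range_eq_top.2 (surjective_of_hasSNIP hA hsnip hL))
  have hA'_cont : Continuous fun d => A + patternPart G d :=
    continuous_const.add (patternPart G).continuous_of_finiteDimensional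
  have hU_cont : Continuous fun d => 1 + rowPart i d :=
    continuous_const.add (rowPart i).continuous_of_finiteDimensional
  have hA'_good : ∀ᶠ d in 𝓝 0, (∀ p q, G.Adj p q → (A + patternPart G d) p q ≠ 0) ∧
      Function.Injective (snipMap G i (A + patternPart G d)) :=
    hA'_cont.continuousAt.preimage_mem_nhds <| IsOpen.mem_nhds
      ((isOpen_setOf_ne_zero_of_adj G).inter
        (ContinuousLinearMap.isOpen_injective.preimage (continuous_snipMap G i)))
      (by simpa using
        ⟨fun p q hpq => (hA.2 p q hpq.ne).2 hpq, (hA.hasSNIP_iff_injective i).1 hsnip⟩)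
  have hU_good : ∀ᶠ d in 𝓝 0, (1 + rowPart i d).det ≠ 0 ∧ (delRC (1 + rowPart i d) i).det ≠ 0 :=
    (hU_cont.matrix_det.continuousAt.eventually_ne (by simp)).and
      ((hU_cont.matrix_submatrix _ _).matrix_det.continuousAt.eventually_ne
        (by simp [submatrix_one _ Subtype.val_injective]))
  have hsolve := hmap.ge (Filter.image_mem_map (hA'_good.and hU_good))
  simp only [map_zero, add_zero, transpose_one, one_mul, mul_one] at hsolve
  filter_upwards [hsolve] with M ⟨d, ⟨⟨hedges, hinj⟩, hU, hUi⟩, hFd⟩ hM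
  have hInS := hA.add_patternPart hedges
  have hMU := (hInS.1.transpose_mul_mul _).eq_of_add_sub_transpose_eq hM hFd
  have hrow : ∀ q, q ≠ i → (1 + rowPart i d) i q = 0 := fun q hq => by
    rw [Matrix.add_apply, one_apply_ne (Ne.symm hq), rowPart_apply,
      mask_apply_of_neg (not_not.2 rfl), add_zero]
  refine ⟨_, hInS, (hInS.hasSNIP_iff_injective i).2 hinj, ?_, ?_⟩ <;> rw [← hMU]
  · exact (nullity_transpose_mul_mul _ (isUnit_iff_ne_zero.2 hU)).symm
  · exact (nullity_delRC_transpose_mul_mul _ (isUnit_iff_ne_zero.2 hUi) hrow).symm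

end Bifurcation

theorem stmt1 (G : SimpleGraph V) (i : V) (A : Matrix V V ℝ)
    (hA : InS G A) (hsnip : HasSNIP A i) :
    ∃ ε > (0 : ℝ), ∀ M : Matrix V V ℝ, M.IsSymm →
      (∀ j k, |M j k - A j k| < ε) →
      ∃ A' : Matrix V V ℝ, InS G A' ∧ HasSNIP A' i ∧
        nullity A' = nullity M ∧ nullity (delRC A' i) = nullity (delRC M i) := by
  obtain ⟨ε, hε, h⟩ :=
    exists_pos_forall_abs_sub_lt_of_eventually (eventually_exists_bifurcation hA hsnip)
  exact ⟨ε, hε, fun M hM hMA => h M hMA hM⟩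
end

section
/- Let G be a simple graph on a finite vertex set V and A ∈ S(G). Suppose α ⊆ V is a set of vertices such that the principal submatrix A[α] is invertible, and let S = A[αᶜ] − A[αᶜ,α] A[α]⁻¹ A[α,αᶜ] be the Schur complement of A[α] in A, indexed by V∖α. Suppose H is a simple graph on V∖α such that S ∈ S(H) and the set N_G(α)∖α = {v ∈ V∖α : v is adjacent in G to some vertex of α} is a clique in H. Then if A has SAP, S has SAP. -/
open Matrix

variable {V : Type*} [Fintype V] [DecidableEq V]

/-! A symmetric `X` witnessing the failure of SAP for the Schur complement `S` lifts to
`Y = W X Wᵀ` with `W = [-A[α]⁻¹ A[α,αᶜ]; I]`. Since `A W = [0; S]`, we get `A Y = 0`. The clique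
hypothesis makes `X` vanish on `N × N`, where `N` is the neighbourhood of `α`, which carries the
supports of the columns of `A[α,αᶜ]`; hence the `α`-block of `Y` vanishes and `A ∘ Y = 0`. SAP for
`A` then gives `Y = 0`, and `X` is a block of `Y`. -/

namespace Matrix

theorem mul_apply_eq_zero_of_forall_or {R l m n : Type*} [Fintype m]
    [NonUnitalNonAssocSemiring R] {P : Matrix l m R} {Q : Matrix m n R} {i : l} {j : n}
    (h : ∀ k, P i k = 0 ∨ Q k j = 0) : (P * Q) i j = 0 :=
  Finset.sum_eq_zero fun k _ => by rcases h k with h | h <;> simp [h]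

theorem fromBlocks_mul_fromRows_neg_inv_mul_one {R m n : Type*} [Fintype m] [Fintype n]
    [DecidableEq m] [DecidableEq n] [CommRing R] {B : Matrix m m R} {C : Matrix m n R}
    {Cl : Matrix n m R} {D : Matrix n n R} (hB : IsUnit B.det) :
    fromBlocks B C Cl D * (fromRows (-(B⁻¹ * C)) 1 : Matrix (m ⊕ n) n R) =
      fromRows 0 (D - Cl * B⁻¹ * C) := by
  rw [fromBlocks_mul_fromRows, Matrix.mul_neg, mul_nonsing_inv_cancel_left _ _ hB,
    Matrix.mul_neg, Matrix.mul_one, Matrix.mul_one, neg_add_cancel, Matrix.mul_assoc,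
    neg_add_eq_sub]

end Matrix

theorem InS.apply_eq_zero_of_isClique {U : Type*} {G : SimpleGraph U} {A X : Matrix U U ℝ}
    (hA : InS G A) {N : Set U} (hN : G.IsClique N) (hAX : ∀ j k, A j k * X j k = 0)
    (hX : ∀ j, X j j = 0) : ∀ j ∈ N, ∀ k ∈ N, X j k = 0 := by
  intro j hj k hk
  obtain rfl | hjk := eq_or_ne j k
  · exact hX j
  · exact (mul_eq_zero.mp (hAX j k)).resolve_left ((hA.2 j k hjk).2 (hN hj hk hjk))

theorem HasSAP.submatrix_equiv {U W : Type*} [Fintype U] [Fintype W] {A : Matrix U U ℝ}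
    (hA : HasSAP A) (e : W ≃ U) : HasSAP (A.submatrix e e) := by
  intro X hXs hAX hXd hAX0
  have hY := hA (X.submatrix e.symm e.symm) (by simp [IsSymm, transpose_submatrix, hXs.eq])
    (fun j k => by simpa using hAX (e.symm j) (e.symm k)) (fun j => hXd _) <| by
      rw [← submatrix_id_id A, ← e.self_comp_symm, ← submatrix_submatrix, submatrix_mul_equiv,
        hAX0, submatrix_zero]
      rfl
  ext j k
  simpa using congrFun (congrFun hY (e j)) (e k)

theorem HasSAP.eq_zero_of_mul_schur_eq_zero {m n : Type*} [Fintype m] [Fintype n]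
    [DecidableEq m] [DecidableEq n] {B : Matrix m m ℝ} {C : Matrix m n ℝ}
    {Cl : Matrix n m ℝ} {D : Matrix n n ℝ} (hM : HasSAP (fromBlocks B C Cl D)) (hB : IsUnit B)
    {N : Set n} (hC : ∀ i, ∀ j ∉ N, C i j = 0) (hCl : ∀ i ∉ N, ∀ j, Cl i j = 0)
    {X : Matrix n n ℝ} (hXs : X.IsSymm) (hXN : ∀ i ∈ N, ∀ j ∈ N, X i j = 0)
    (hSX : ∀ i j, (D - Cl * B⁻¹ * C) i j * X i j = 0) (hXd : ∀ j, X j j = 0)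
    (hSX0 : (D - Cl * B⁻¹ * C) * X = 0) : X = 0 := by
  have hMW := fromBlocks_mul_fromRows_neg_inv_mul_one (C := C) (Cl := Cl) (D := D)
    ((isUnit_iff_isUnit_det B).mp hB)
  set K := -(B⁻¹ * C)
  set W : Matrix (m ⊕ n) n ℝ := fromRows K 1
  have hK : ∀ i, ∀ j ∉ N, K i j = 0 := fun i j hj => by
    simp [K, mul_apply_eq_zero_of_forall_or fun k => .inr (hC k j hj)]
  have hKX : ∀ i, ∀ j ∈ N, (K * X) i j = 0 := fun i j hj =>
    mul_apply_eq_zero_of_forall_or fun k => (em (k ∈ N)).symm.imp (hK i k) (hXN k · j hj)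
  have hKXK : K * X * Kᵀ = 0 := by
    ext i j
    exact mul_apply_eq_zero_of_forall_or fun k => (em (k ∈ N)).imp (hKX i k) (hK j k)
  have hY : W * X * Wᵀ = fromBlocks 0 (K * X) (X * Kᵀ) X := by
    simp [W, transpose_fromRows, hKXK]
  have hCBC : ∀ i j, X i j ≠ 0 → (Cl * B⁻¹ * C) i j = 0 := fun i j hX => by
    by_cases hi : i ∈ N
    · by_cases hj : j ∈ N
      · exact absurd (hXN i hi j hj) hX
      · exact mul_apply_eq_zero_of_forall_or fun k => .inr (hC k j hj)
    · rw [Matrix.mul_assoc]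
      exact mul_apply_eq_zero_of_forall_or fun k => .inl (hCl i hi k)
  have hHad : ∀ i j, fromBlocks B C Cl D i j * (W * X * Wᵀ) i j = 0 := by
    rw [hY]
    rintro (i | i) (j | j)
    · simp
    · by_cases hj : j ∈ N
      · simp [hKX i j hj]
      · simp [hC i j hj]
    · by_cases hi : i ∈ N
      · have hXK : X * Kᵀ = (K * X)ᵀ := by rw [transpose_mul, hXs.eq]
        rw [fromBlocks_apply₂₁, fromBlocks_apply₂₁, hXK, transpose_apply, hKX j i hi, mul_zero]
      · simp [hCl i hi]
    · by_cases hX : X i j = 0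
      · simp [hX]
      · have := hSX i j
        rwa [Matrix.sub_apply, hCBC i j hX, sub_zero] at this
  have hY0 := hM (W * X * Wᵀ) (by simp [IsSymm, transpose_mul, hXs.eq, Matrix.mul_assoc])
    hHad (by rw [hY]; rintro (i | i) <;> simp [hXd])
    (by rw [← Matrix.mul_assoc, ← Matrix.mul_assoc, hMW]; simp [hSX0])
  rw [hY] at hY0
  ext i j
  simpa using congrFun (congrFun hY0 (.inr i)) (.inr j)

theorem stmt8 (G : SimpleGraph V) (A : Matrix V V ℝ) (α : Finset V)
    (H : SimpleGraph {x // x ∉ α})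
    (hA : InS G A)
    (hinv : IsUnit (A.submatrix (Subtype.val : {x // x ∈ α} → V)
      (Subtype.val : {x // x ∈ α} → V)))
    (S : Matrix {x // x ∉ α} {x // x ∉ α} ℝ)
    (hS : S = A.submatrix (Subtype.val : {x // x ∉ α} → V)
        (Subtype.val : {x // x ∉ α} → V) -
      A.submatrix (Subtype.val : {x // x ∉ α} → V) (Subtype.val : {x // x ∈ α} → V) *
      (A.submatrix (Subtype.val : {x // x ∈ α} → V) (Subtype.val : {x // x ∈ α} → V))⁻¹ *
      A.submatrix (Subtype.val : {x // x ∈ α} → V) (Subtype.val : {x // x ∉ α} → V))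
    (hSH : InS H S)
    (hclique : H.IsClique {v : {x // x ∉ α} | ∃ u ∈ α, G.Adj (v : V) u})
    (hSAP : HasSAP A) : HasSAP S := by
  have hne (u : {x // x ∈ α}) (v : {x // x ∉ α}) : (u : V) ≠ v := fun h => v.2 (h ▸ u.2)
  have hblocks : A.submatrix (Equiv.sumCompl (· ∈ α)) (Equiv.sumCompl (· ∈ α)) =
      fromBlocks (A.submatrix (↑) (↑)) (A.submatrix (↑) (↑)) (A.submatrix (↑) (↑))
        (A.submatrix (↑) (↑)) := by
    ext (i | i) (j | j) <;> rfl
  intro X hXs hSX hXd hSX0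
  subst hS
  refine (hblocks ▸ hSAP.submatrix_equiv _).eq_zero_of_mul_schur_eq_zero hinv ?_ ?_ hXs
    (hSH.apply_eq_zero_of_isClique hclique hSX hXd) hSX hXd hSX0
  · intro u v hv
    by_contra h
    exact hv ⟨u, u.2, ((hA.2 _ _ (hne u v)).1 h).symm⟩
  · intro v hv u
    by_contra h
    exact hv ⟨u, u.2, (hA.2 _ _ (hne u v).symm).1 h⟩
end

section
/- Let (G,i) be a rooted graph on a finite vertex set V and let k ≥ 0. If (G,i) allows the nullity pair (k,k) with i-SNIP, then e(G) + 1 ≥ (k+2)(k+1)/2, where e(G) is the number of edges of G. -/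
open Matrix

variable {V : Type*} [Fintype V] [DecidableEq V]

/-!
Let `U = kerDelRow A i = {x | A x ∈ span eᵢ}`. Equal nullities force `eᵢ ∈ range A`: otherwise
some kernel vector of `A` has a nonzero `i`-th entry, and then deleting `i` drops the nullity.
Hence `dim U = k + 1`, and the symmetric matrices with columns in `U` form a space `W` of
dimension at least `(k + 2)(k + 1) / 2`. The rows `j ≠ i` of `A X` vanish for `X ∈ W`, so i-SNIP
says precisely that `X ↦ (edge entries of X, diagonal of X)` is injective on `W`. The diagonal
vanishes outside `T ∪ {i}`, where `T` is the support of `U` minus `i`, and for `j ∈ T` the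
equation `(A X)ⱼⱼ = 0` is a linear relation between `Xⱼⱼ` and the edge entries. A second use of
i-SNIP shows that these `|T|` relations are independent, so `dim W ≤ (e(G) + |T| + 1) - |T|`.
-/

open Module

section LinearAlgebra

variable {K : Type*} [Field K]

theorem finrank_comap_span_singleton {M N : Type*} [AddCommGroup M] [Module K M]
    [FiniteDimensional K M] [AddCommGroup N] [Module K N] (f : M →ₗ[K] N) {y : N}
    (hy : y ∈ LinearMap.range f) (hy0 : y ≠ 0) :
    finrank K ((K ∙ y).comap f) = finrank K (LinearMap.ker f) + 1 := by
  have hrange : LinearMap.range (f.domRestrict ((K ∙ y).comap f)) = K ∙ y := by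
    rw [LinearMap.range_domRestrict, Submodule.map_comap_eq,
      inf_eq_right.mpr ((Submodule.span_singleton_le_iff_mem _ _).mpr hy)]
  have hker := (Submodule.comapSubtypeEquivOfLe (LinearMap.ker_le_comap (p := K ∙ y) f)).finrank_eq
  have := LinearMap.finrank_range_add_finrank_ker (f.domRestrict ((K ∙ y).comap f))
  rw [hrange, LinearMap.ker_domRestrict, hker, finrank_span_singleton hy0] at this
  omega

theorem finrank_add_finrank_le_of_comp_eq_zero {W P Q : Type*} [AddCommGroup W] [Module K W]
    [AddCommGroup P] [Module K P] [FiniteDimensional K P] [AddCommGroup Q] [Module K Q]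
    {φ : W →ₗ[K] P} {χ : P →ₗ[K] Q} (hφ : Function.Injective φ) (hχ : Function.Surjective χ)
    (h : χ ∘ₗ φ = 0) : finrank K W + finrank K Q ≤ finrank K P := by
  have hrank := LinearMap.finrank_range_add_finrank_ker χ
  rw [LinearMap.range_eq_top.mpr hχ, finrank_top] at hrank
  have hle := Submodule.finrank_mono (LinearMap.range_le_ker_iff.mpr h)
  rw [LinearMap.finrank_range_of_inj hφ] at hle
  omega

theorem mem_span_single_one_iff {n : Type*} [DecidableEq n] {i : n} {v : n → K} :
    v ∈ K ∙ Pi.single i 1 ↔ ∀ j ≠ i, v j = 0 := by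
  refine ⟨fun hv j hj => ?_, fun hv => Submodule.mem_span_singleton.mpr ⟨v i, ?_⟩⟩
  · obtain ⟨r, rfl⟩ := Submodule.mem_span_singleton.mp hv
    simp [hj]
  · ext j
    by_cases hj : j = i
    · simp [hj]
    · simp [hj, hv j hj]

def kerDelRow {n : Type*} [Fintype n] [DecidableEq n] (A : Matrix n n K) (i : n) :
    Submodule K (n → K) :=
  (K ∙ Pi.single i 1).comap A.mulVecLin

theorem mem_kerDelRow {n : Type*} [Fintype n] [DecidableEq n] {A : Matrix n n K} {i : n}
    {x : n → K} : x ∈ kerDelRow A i ↔ ∀ j ≠ i, (A *ᵥ x) j = 0 :=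
  mem_span_single_one_iff

theorem finrank_kerDelRow {n : Type*} [Fintype n] [DecidableEq n] {A : Matrix n n K} {i : n}
    (hi : Pi.single i 1 ∈ LinearMap.range A.mulVecLin) :
    finrank K (kerDelRow A i) = finrank K (LinearMap.ker A.mulVecLin) + 1 :=
  finrank_comap_span_singleton _ hi (Pi.single_ne_zero_iff.mpr one_ne_zero)

theorem exists_mulVec_eq_zero_dotProduct_ne_zero {n : Type*} [Fintype n] [DecidableEq n]
    {A : Matrix n n K} (hA : A.IsSymm) {y : n → K} (hy : y ∉ LinearMap.range A.mulVecLin) :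
    ∃ z, A *ᵥ z = 0 ∧ z ⬝ᵥ y ≠ 0 := by
  obtain ⟨f, hfy, hf⟩ := Submodule.exists_le_ker_of_notMem hy
  set z := (dotProductEquiv K n).symm f
  have hfz : ∀ v, f v = z ⬝ᵥ v := fun v => by
    rw [← (dotProductEquiv K n).apply_symm_apply f]; rfl
  refine ⟨z, ?_, by rwa [← hfz]⟩
  rw [← hA.eq, mulVec_transpose]
  refine dotProduct_eq_zero _ fun x => ?_
  rw [← dotProduct_mulVec, ← hfz]
  exact hf ⟨x, rfl⟩

theorem mulVec_indicator {R : Type*} [NonUnitalNonAssocSemiring R] {n : Type*} [Fintype n]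
    {A : Matrix n n R} {S : Set n} (hS : ∀ m l, A m l ≠ 0 → (m ∈ S ↔ l ∈ S)) (u : n → R) :
    A *ᵥ S.indicator u = S.indicator (A *ᵥ u) := by
  ext m
  change ∑ l, A m l * S.indicator u l = S.indicator (fun m => ∑ l, A m l * u l) m
  by_cases hm : m ∈ S
  · rw [Set.indicator_of_mem hm]
    refine Finset.sum_congr rfl fun l _ => ?_
    by_cases hl : l ∈ S
    · rw [Set.indicator_of_mem hl]
    · rw [Set.indicator_of_notMem hl, not_imp_comm.mp (hS m l) (fun h => hl (h.mp hm)),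
        zero_mul, zero_mul]
  · rw [Set.indicator_of_notMem hm]
    refine Finset.sum_eq_zero fun l _ => ?_
    by_cases hl : l ∈ S
    · rw [not_imp_comm.mp (hS m l) (fun h => hm (h.mpr hl)), zero_mul]
    · rw [Set.indicator_of_notMem hl, mul_zero]

end LinearAlgebra

theorem mulVec_extendByZero_of_ne (A : Matrix V V ℝ) {i : V} (y : {j // j ≠ i} → ℝ)
    (m : {j // j ≠ i}) :
    (A *ᵥ Function.ExtendByZero.linearMap ℝ Subtype.val y) m = (delRC A i *ᵥ y) m :=
  (Fintype.sum_of_injective Subtype.val Subtype.val_injective _ _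
    (fun _ hl => mul_eq_zero_of_right _ (Function.extend_apply' y (0 : V → ℝ) _ hl))
    (fun _ => by simp [delRC])).symm

theorem nullity_delRC_lt {A : Matrix V V ℝ} (hA : A.IsSymm) {i : V} {z : V → ℝ}
    (hz : A *ᵥ z = 0) (hzi : z i ≠ 0) : nullity (delRC A i) < nullity A := by
  set ι := Function.ExtendByZero.linearMap ℝ (Subtype.val : {j // j ≠ i} → V)
  set K₀ := LinearMap.ker A.mulVecLin ⊓ LinearMap.ker (LinearMap.proj i)
  have hmap : (LinearMap.ker (delRC A i).mulVecLin).map ι ≤ K₀ := by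
    rintro _ ⟨y, hy, rfl⟩
    have hne : ∀ j ≠ i, (A *ᵥ ι y) j = 0 := fun j hj => by
      rw [mulVec_extendByZero_of_ne A y ⟨j, hj⟩]; exact congrFun hy _
    have hdot : z ⬝ᵥ (A *ᵥ ι y) = z i * (A *ᵥ ι y) i :=
      Finset.sum_eq_single i (fun j _ hj => by rw [hne j hj, mul_zero]) (by simp)
    have hi : z i * (A *ᵥ ι y) i = 0 := by
      rw [← hdot, dotProduct_mulVec, ← mulVec_transpose, hA.eq, hz, zero_dotProduct]
    refine ⟨LinearMap.mem_ker.mpr (funext fun j => ?_), LinearMap.mem_ker.mpr ?_⟩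
    · by_cases hj : j = i
      · subst hj; exact (mul_eq_zero.mp hi).resolve_left hzi
      · exact hne j hj
    · exact Function.extend_apply' _ _ _ fun ⟨a, ha⟩ => a.2 ha
  have hlt : K₀ < LinearMap.ker A.mulVecLin :=
    inf_lt_left.mpr fun h => hzi (h (LinearMap.mem_ker.mpr hz))
  calc nullity (delRC A i)
      = finrank ℝ ((LinearMap.ker (delRC A i).mulVecLin).map ι) :=
        (Submodule.equivMapOfInjective ι
          (Function.extend_injective Subtype.val_injective (0 : V → ℝ)) _).finrank_eq
    _ ≤ finrank ℝ K₀ := Submodule.finrank_mono hmap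
    _ < nullity A := Submodule.finrank_lt_finrank_of_lt hlt

theorem single_mem_range_of_nullity_le {A : Matrix V V ℝ} (hA : A.IsSymm) {i : V}
    (h : nullity A ≤ nullity (delRC A i)) : Pi.single i 1 ∈ LinearMap.range A.mulVecLin := by
  by_contra hy
  obtain ⟨z, hz, hzi⟩ := exists_mulVec_eq_zero_dotProduct_ne_zero hA hy
  rw [dotProduct_single, mul_one] at hzi
  exact (nullity_delRC_lt hA hz hzi).not_ge h

section SymmWithColsIn

variable {K : Type*} [Field K] {n : Type*} [Fintype n]

def symmWithColsIn (U : Submodule K (n → K)) : Submodule K (Matrix n n K) where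
  carrier := {X | X.IsSymm ∧ ∀ l, Xᵀ l ∈ U}
  add_mem' hX hY := ⟨hX.1.add hY.1, fun l => U.add_mem (hX.2 l) (hY.2 l)⟩
  zero_mem' := ⟨isSymm_zero, fun _ => U.zero_mem⟩
  smul_mem' c _ hX := ⟨hX.1.smul c, fun l => U.smul_mem c (hX.2 l)⟩

theorem choose_le_finrank_symmWithColsIn (U : Submodule K (n → K)) :
    (finrank K U + 1).choose 2 ≤ finrank K (symmWithColsIn U) := by
  classical
  -- `c ↦ B C(c) Bᵀ`, where the columns of `B` are a basis of `U` and `C(c) a a' = c s(a, a')`,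
  -- is injective since `B` has a left inverse `L`.
  set m := finrank K U
  let b := finBasis K U
  let B : Matrix n (Fin m) K := LinearMap.toMatrix' (U.subtype ∘ₗ b.equivFun.symm.toLinearMap)
  obtain ⟨g, hg⟩ := U.subtype.exists_leftInverse_of_injective U.ker_subtype
  let L : Matrix (Fin m) n K := LinearMap.toMatrix' (b.equivFun.toLinearMap ∘ₗ g)
  have hLB : L * B = 1 := by
    rw [← LinearMap.toMatrix'_comp, ← LinearMap.toMatrix'_id]
    congr 1
    refine LinearMap.ext fun x => ?_
    simp only [LinearMap.comp_apply, LinearEquiv.coe_coe]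
    rw [← LinearMap.comp_apply g, hg, LinearMap.id_apply, LinearEquiv.apply_symm_apply,
      LinearMap.id_apply]
  let C : (Sym2 (Fin m) → K) →ₗ[K] Matrix (Fin m) (Fin m) K :=
    { toFun c := of fun a a' => c s(a, a')
      map_add' _ _ := rfl
      map_smul' _ _ := rfl }
  let Φ := mulRightLinearMap n K Bᵀ ∘ₗ mulLeftLinearMap (Fin m) K B ∘ₗ C
  have hΦ : ∀ c, L * Φ c * Lᵀ = C c := fun c => by
    simp only [Φ, LinearMap.comp_apply, mulLeftLinearMap_apply, mulRightLinearMap_apply,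
      ← Matrix.mul_assoc, hLB, Matrix.one_mul]
    rw [Matrix.mul_assoc, ← transpose_mul, hLB, transpose_one, Matrix.mul_one]
  have hinj : Function.Injective Φ := fun c c' h => by
    have hC := hΦ c ▸ hΦ c' ▸ congrArg (L * · * Lᵀ) h
    funext s
    induction s using Sym2.ind with
    | _ a a' => exact congrFun (congrFun hC a) a'
  have hrange : LinearMap.range Φ ≤ symmWithColsIn U := by
    rintro _ ⟨c, rfl⟩
    refine ⟨?_, fun l => ?_⟩
    · have hC : (C c).IsSymm := IsSymm.ext fun a a' => congrArg c Sym2.eq_swap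
      change (B * C c * Bᵀ)ᵀ = B * C c * Bᵀ
      rw [transpose_mul, transpose_mul, transpose_transpose, hC.eq, Matrix.mul_assoc]
    · change (B * C c * Bᵀ)ᵀ l ∈ U
      rw [Matrix.mul_assoc, show (B * (C c * Bᵀ))ᵀ l = B *ᵥ (C c * Bᵀ)ᵀ l from rfl,
        LinearMap.toMatrix'_mulVec]
      exact (b.equivFun.symm _).2
  calc (m + 1).choose 2 = finrank K (Sym2 (Fin m) → K) := by
        rw [finrank_fintype_fun_eq_card, Sym2.card, Fintype.card_fin]
    _ = finrank K (LinearMap.range Φ) := (LinearMap.finrank_range_of_inj hinj).symm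
    _ ≤ finrank K (symmWithColsIn U) := Submodule.finrank_mono hrange

theorem mul_apply_eq_zero_of_mem_symmWithColsIn [DecidableEq n] {A : Matrix n n K} {i : n}
    {X : Matrix n n K} (hX : X ∈ symmWithColsIn (kerDelRow A i)) {j : n}
    (hj : j ≠ i) (k : n) : (A * X) j k = 0 :=
  mem_kerDelRow.mp (hX.2 k) j hj

end SymmWithColsIn

section EdgeMaps

variable {K : Type*} [Field K] {n : Type*} (G : SimpleGraph n)

-- `X a b + X b a` is symmetric in `a, b`, so it lives on `Sym2`; it is `2 X a b` for symmetric `X`.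
def edgeEntries : Matrix n n K →ₗ[K] G.edgeSet → K :=
  LinearMap.pi fun e => Sym2.lift
    ⟨fun a b => entryLinearMap K K a b + entryLinearMap K K b a, fun _ _ => add_comm _ _⟩ e.1

@[simp]
theorem edgeEntries_apply_mk (X : Matrix n n K) {a b : n} (h : s(a, b) ∈ G.edgeSet) :
    edgeEntries G X ⟨s(a, b), h⟩ = X a b + X b a := by
  simp [edgeEntries]

variable [Fintype n] [DecidableRel G.Adj]

def edgeConstraint (A : Matrix n n K) : (G.edgeSet → K) →ₗ[K] n → K :=
  LinearMap.pi fun j => ∑ l,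
    if h : G.Adj j l then A j l • LinearMap.proj (⟨s(j, l), G.mem_edgeSet.mpr h⟩ : G.edgeSet)
    else 0

theorem edgeConstraint_apply (A : Matrix n n K) (ρ : G.edgeSet → K) (j : n) :
    edgeConstraint G A ρ j =
      ∑ l, if h : G.Adj j l then A j l * ρ ⟨s(j, l), G.mem_edgeSet.mpr h⟩ else 0 := by
  simp only [edgeConstraint, LinearMap.pi_apply, LinearMap.sum_apply]
  exact Finset.sum_congr rfl fun l _ => by split_ifs <;> rfl

theorem edgeConstraint_single [DecidableEq n] {A : Matrix n n K} (hA : A.IsSymm) {a b : n}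
    (h : G.Adj a b) :
    edgeConstraint G A (Pi.single ⟨s(a, b), G.mem_edgeSet.mpr h⟩ 1) =
      A a b • (Pi.single a 1 + Pi.single b 1) := by
  ext j
  have hterm : ∀ l, (if h' : G.Adj j l then
      A j l * (Pi.single ⟨s(a, b), G.mem_edgeSet.mpr h⟩ 1 : G.edgeSet → K)
        ⟨s(j, l), G.mem_edgeSet.mpr h'⟩ else 0) =
      if s(j, l) = s(a, b) then A j l else 0 := fun l => by
    split_ifs with hjl heq heq
    · simp [heq]
    · simp [Subtype.ext_iff, heq]
    · exact absurd (by rw [← G.mem_edgeSet, heq]; exact h) hjl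
    · rfl
  rw [edgeConstraint_apply, Finset.sum_congr rfl fun l _ => hterm l]
  rcases eq_or_ne j a with rfl | hja
  · simp [h.ne]
  rcases eq_or_ne j b with rfl | hjb
  · simp [hja, hA.apply]
  · simp [hja, hjb]

end EdgeMaps

theorem edgeConstraint_edgeEntries {G : SimpleGraph V} [DecidableRel G.Adj] {A : Matrix V V ℝ}
    (hA : InS G A) {X : Matrix V V ℝ} (hX : X.IsSymm) (j : V) :
    edgeConstraint G A (edgeEntries G X) j + 2 * (A j j * X j j) = 2 * (A * X) j j := by
  have hterm : ∀ l, ((if h : G.Adj j l then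
      A j l * edgeEntries G X ⟨s(j, l), G.mem_edgeSet.mpr h⟩ else 0) +
        if j = l then 2 * (A j l * X l j) else 0) = 2 * (A j l * X l j) := fun l => by
    by_cases hjl : j = l
    · subst hjl; simp
    by_cases hadj : G.Adj j l
    · simp [hadj, hjl, hX.apply l j]; ring
    · simp [hadj, hjl, not_imp_comm.mp ((hA.2 j l hjl).mp) hadj]
  rw [edgeConstraint_apply, mul_apply, Finset.mul_sum, ← Finset.sum_congr rfl fun l _ => hterm l,
    Finset.sum_add_distrib, Finset.sum_ite_eq]
  simp

theorem indicator_eq_zero_of_hasSNIP {A : Matrix V V ℝ} {i : V} (hsnip : HasSNIP A i)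
    (hw : Pi.single i 1 ∈ LinearMap.range A.mulVecLin) {S : Set V}
    (hS : ∀ m l, A m l ≠ 0 → (m ∈ S ↔ l ∈ S)) (hi : i ∉ S) {u : V → ℝ}
    (hu : u ∈ kerDelRow A i) : S.indicator u = 0 := by
  -- `A` has no entries between `S` and `Sᶜ`, so `X = x w'ᵀ + w' xᵀ` with `x = u` on `S` and
  -- `w' = w` on `Sᶜ` satisfies `A ∘ X = 0`, `diag X = 0` and `A X = eᵢ xᵀ`.
  obtain ⟨w, hw⟩ := hw
  set x := S.indicator u
  set w' := Sᶜ.indicator w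
  have hx : A *ᵥ x = 0 := by
    rw [mulVec_indicator hS]
    ext m
    refine Set.indicator_apply_eq_zero.mpr fun hm => ?_
    exact mem_kerDelRow.mp hu m (ne_of_mem_of_not_mem hm hi)
  have hw' : A *ᵥ w' = Pi.single i 1 := by
    rw [mulVec_indicator (S := Sᶜ) fun m l h => not_congr (hS m l h)]
    exact (congrArg _ hw).trans (Set.indicator_eq_self.mpr
      (Pi.support_single_subset.trans (Set.singleton_subset_iff.mpr hi)))
  have hcross : ∀ j k, (j ∈ S ↔ k ∈ S) → x j * w' k = 0 := fun j k hjk => by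
    by_cases hj : j ∈ S
    · simp [w', hjk.mp hj]
    · simp [x, hj]
  set X := vecMulVec x w' + vecMulVec w' x
  have hAX : A * X = vecMulVec (Pi.single i 1) x := by
    rw [Matrix.mul_add, mul_vecMulVec, mul_vecMulVec, hx, hw', zero_vecMulVec, zero_add]
  have hX0 : X = 0 := by
    refine hsnip X (IsSymm.ext fun j k => by simp [X, vecMulVec_apply]; ring)
      (fun j k => ?_) (fun j => ?_) (fun j k hj => ?_)
    · by_cases h : A j k = 0
      · rw [h, zero_mul]
      · simp [X, vecMulVec_apply, hcross j k (hS j k h),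
          mul_comm (w' j), hcross k j (hS j k h).symm]
    · simp [X, vecMulVec_apply, mul_comm (w' j), hcross j j Iff.rfl]
    · simp [hAX, vecMulVec_apply, hj]
  ext k
  simpa [hX0, vecMulVec_apply] using (congrFun (congrFun hAX i) k).symm

theorem eq_zero_of_hasSNIP {G : SimpleGraph V} {A : Matrix V V ℝ} {i : V} (hA : InS G A)
    (hsnip : HasSNIP A i) {X : Matrix V V ℝ}
    (hX : X ∈ symmWithColsIn (kerDelRow A i))
    (hE : edgeEntries G X = 0) (hdiag : ∀ j, X j j = 0) : X = 0 := by
  refine hsnip X hX.1 (fun j k => ?_) hdiag (fun j k hj =>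
    mul_apply_eq_zero_of_mem_symmWithColsIn hX hj k)
  by_cases hjk : j = k
  · rw [hjk, hdiag, mul_zero]
  by_cases hadj : G.Adj j k
  · have hsum := congrFun hE ⟨s(j, k), G.mem_edgeSet.mpr hadj⟩
    rw [edgeEntries_apply_mk, hX.1.apply j k, Pi.zero_apply, ← two_mul] at hsum
    rw [(mul_eq_zero.mp hsum).resolve_left two_ne_zero, mul_zero]
  · rw [not_imp_comm.mp (hA.2 j k hjk).mp hadj, zero_mul]

theorem surjective_funLeft_edgeConstraint {G : SimpleGraph V} [DecidableRel G.Adj]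
    {A : Matrix V V ℝ} {i : V} (hA : InS G A) (hsnip : HasSNIP A i)
    (hw : Pi.single i 1 ∈ LinearMap.range A.mulVecLin) {T : Set V}
    (hT : ∀ j ∈ T, j ≠ i ∧ ∃ u ∈ kerDelRow A i, u j ≠ 0) :
    Function.Surjective (LinearMap.funLeft ℝ ℝ ((↑) : T → V) ∘ₗ edgeConstraint G A) := by
  -- A functional killing the range gives weights `c` supported in `T` with `c a + c b = 0` along
  -- edges; the support of `c` is a union of components avoiding `i`, where `U` vanishes.
  rw [← LinearMap.dualMap_injective_iff, injective_iff_map_eq_zero]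
  intro φ hφ
  set c : V → ℝ := fun j => φ (LinearMap.funLeft ℝ ℝ ((↑) : T → V) (Pi.single j 1))
  have hcT : ∀ j ∉ T, c j = 0 := fun j hj => by
    have : LinearMap.funLeft ℝ ℝ ((↑) : T → V) (Pi.single j 1) = 0 := by
      ext t; simp [LinearMap.funLeft_apply, ne_of_mem_of_not_mem t.2 hj]
    simp [c, this]
  have hedge : ∀ a b, G.Adj a b → c a + c b = 0 := fun a b h => by
    have := LinearMap.congr_fun hφ (Pi.single ⟨s(a, b), G.mem_edgeSet.mpr h⟩ 1)
    rw [LinearMap.dualMap_apply, LinearMap.comp_apply, edgeConstraint_single G hA.1 h, map_smul,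
      map_add, map_smul, map_add, LinearMap.zero_apply, smul_eq_mul] at this
    exact (mul_eq_zero.mp this).resolve_left ((hA.2 a b h.ne).mpr h)
  have hc : c = 0 := by
    set S := {j | c j ≠ 0}
    have hS : ∀ m l, A m l ≠ 0 → (m ∈ S ↔ l ∈ S) := fun m l h => by
      rcases eq_or_ne m l with rfl | hml
      · rfl
      · simp only [S, Set.mem_ofPred_eq,
          eq_neg_of_add_eq_zero_left (hedge m l ((hA.2 m l hml).mp h)), neg_ne_zero]
    have hiS : i ∉ S := fun hi => hi (hcT i fun hiT => (hT i hiT).1 rfl)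
    ext j
    by_contra hj
    obtain ⟨-, u, hu, huj⟩ := hT j (by_contra fun h => hj (hcT j h))
    have := congrFun (indicator_eq_zero_of_hasSNIP hsnip hw hS hiS hu) j
    rw [Set.indicator_of_mem hj] at this
    exact huj this
  refine LinearMap.pi_ext fun t x => ?_
  have : Pi.single t x = x • LinearMap.funLeft ℝ ℝ ((↑) : T → V) (Pi.single t.1 1) := by
    ext s; simp [Pi.single_apply, Subtype.ext_iff]
  rw [this, map_smul]
  simp [show φ (LinearMap.funLeft ℝ ℝ ((↑) : T → V) (Pi.single t.1 1)) = c t from rfl, hc]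

theorem finrank_symmWithColsIn_le {G : SimpleGraph V} {A : Matrix V V ℝ} {i : V} (hA : InS G A)
    (hsnip : HasSNIP A i) (hw : Pi.single i 1 ∈ LinearMap.range A.mulVecLin) :
    finrank ℝ (symmWithColsIn (kerDelRow A i)) ≤ G.edgeSet.ncard + 1 := by
  classical
  set T : Set V := {j | j ≠ i ∧ ∃ u ∈ kerDelRow A i, u j ≠ 0}
  let restrictT := LinearMap.funLeft ℝ ℝ ((↑) : T → V)
  -- `ψ X = ((edge entries, diagonal on T), X i i)`, and `χ (ψ X) = (2 (A X)ⱼⱼ)_{j ∈ T}`.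
  let ψ : symmWithColsIn (kerDelRow A i) →ₗ[ℝ] ((G.edgeSet → ℝ) × (T → ℝ)) × ℝ :=
    ((edgeEntries G).prod (restrictT ∘ₗ diagLinearMap V ℝ ℝ)).prod (entryLinearMap ℝ ℝ i i) ∘ₗ
      (symmWithColsIn (kerDelRow A i)).subtype
  let χ : ((G.edgeSet → ℝ) × (T → ℝ)) × ℝ →ₗ[ℝ] T → ℝ :=
    (restrictT ∘ₗ edgeConstraint G A ∘ₗ LinearMap.fst ℝ _ _ +
      LinearMap.pi (fun j : T => (2 * A j j) • LinearMap.proj j) ∘ₗ LinearMap.snd ℝ _ _) ∘ₗ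
        LinearMap.fst ℝ _ _
  have hψ : Function.Injective ψ := by
    rw [← LinearMap.ker_eq_bot, Submodule.eq_bot_iff]
    rintro ⟨X, hX⟩ hψX
    have hE : edgeEntries G X = 0 := congrArg (·.1.1) hψX
    have hT : ∀ j : T, X j j = 0 := congrFun (congrArg (·.1.2) hψX)
    have hi : X i i = 0 := congrArg (·.2) hψX
    refine Subtype.ext (eq_zero_of_hasSNIP hA hsnip hX hE fun j => ?_)
    by_cases hji : j = i
    · subst hji; exact hi
    by_cases hjT : j ∈ T
    · exact hT ⟨j, hjT⟩
    · by_contra hj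
      exact hjT ⟨hji, Xᵀ j, hX.2 j, hj⟩
  have hχ : Function.Surjective χ := fun y => by
    obtain ⟨ρ, hρ⟩ := surjective_funLeft_edgeConstraint hA hsnip hw (T := T) (fun j hj => hj) y
    exact ⟨((ρ, 0), 0), by simpa [χ] using hρ⟩
  have hχψ : χ ∘ₗ ψ = 0 := by
    ext ⟨X, hX⟩ j
    have := edgeConstraint_edgeEntries hA hX.1 j
    show edgeConstraint G A (edgeEntries G X) j + 2 * A j j * X j j = 0
    rw [mul_assoc, this, mul_apply_eq_zero_of_mem_symmWithColsIn hX j.2.1, mul_zero]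
  have := finrank_add_finrank_le_of_comp_eq_zero hψ hχ hχψ
  simp only [finrank_prod, finrank_fintype_fun_eq_card, finrank_self] at this
  rw [Set.ncard_eq_toFinset_card', Set.toFinset_card]
  omega

theorem stmt14 (G : SimpleGraph V) (i : V) (k : ℕ)
    (h : ∃ A : Matrix V V ℝ, InS G A ∧ HasSNIP A i ∧
      nullity A = k ∧ nullity (delRC A i) = k) :
    (k + 2) * (k + 1) / 2 ≤ G.edgeSet.ncard + 1 := by
  obtain ⟨A, hA, hsnip, hk, hki⟩ := h
  have hw := single_mem_range_of_nullity_le hA.1 (hk.trans hki.symm).le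
  have hU : finrank ℝ (kerDelRow A i) = k + 1 := by
    rw [finrank_kerDelRow hw]
    exact congrArg (· + 1) hk
  have hlower := choose_le_finrank_symmWithColsIn (kerDelRow A i)
  rw [hU, Nat.choose_two_right, Nat.add_sub_cancel] at hlower
  exact hlower.trans (finrank_symmWithColsIn_le hA hsnip hw)
end

section
/- Let (G,i) be a rooted graph on a finite vertex set V and let k < ℓ be nonnegative integers. If (G,i) allows the nullity pair (k,ℓ) with i-SNIP, then e(G − i) + 1 ≥ (ℓ+1)ℓ/2, where G − i is the induced subgraph of G on V∖{i} and e(G − i) is its number of edges. -/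
open Matrix

variable {V : Type*} [Fintype V] [DecidableEq V]

open Module

/-!
Put `B = A(i)` and `H = G - i`. The `i`-SNIP of `A` implies that `B` has the Strong Arnold
Property. Let `𝒮` be the space of symmetric `X` with `B X = 0`. The symmetrised products
`u vᵀ + v uᵀ` of vectors from a basis of `ker B` are independent in `𝒮`, so
`dim 𝒮 ≥ ℓ(ℓ+1)/2`.

For the upper bound, SAP says that `X ∈ 𝒮` is determined by its entries on the edges of `H` and
on the diagonal. A diagonal entry `X p p` is forced by the edge entries (through `(B X) p p = 0`
if `B p p ≠ 0`, and because column `p` of `X` lies in `ker B` otherwise) unless `p` lies in the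
set `Z` of vertices with `B p p = 0` that are in the support of `ker B`. For `p ∈ Z`, the
equation `(B X) p p = 0` is instead a linear condition on the edge entries. These `|Z|`
conditions have rank at least `|Z| - 1`: a linear relation among them is a function on `Z`
that changes sign along every edge, and SAP puts all of `Z` in one connected component of `H`.
Hence `dim 𝒮 ≤ (e(H) - |Z| + 1) + |Z| = e(H) + 1`.
-/

def symVecMulVec {R n : Type*} [CommRing R] (u v : n → R) : Matrix n n R :=
  vecMulVec u v + vecMulVec v u

theorem symVecMulVec_comm {R n : Type*} [CommRing R] (u v : n → R) :
    symVecMulVec u v = symVecMulVec v u :=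
  add_comm _ _

section LinearAlgebra

variable {K n ι : Type*} [Field K]

theorem LinearIndependent.exists_dual [DecidableEq ι] {V : Type*} [AddCommGroup V]
    [Module K V] {w : ι → V} (hw : LinearIndependent K w) :
    ∃ φ : ι → Dual K V, ∀ a b, φ a (w b) = if b = a then 1 else 0 := by
  let bs := Basis.span hw
  choose φ hφ using fun a => LinearMap.exists_extend (bs.coord a)
  refine ⟨φ, fun a b => ?_⟩
  have hwb : w b = (Submodule.span K (Set.range w)).subtype (bs b) := by
    rw [Basis.span_apply, Submodule.subtype_apply]
  rw [hwb, ← LinearMap.comp_apply, hφ, Basis.coord_apply, Basis.repr_self, Finsupp.single_apply]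

def Module.Dual.evalMatrix (φ ψ : Dual K (n → K)) : Dual K (Matrix n n K) where
  toFun M := φ fun r => ψ (M r)
  map_add' M N := by
    rw [← map_add]
    congr 1
    funext r
    exact map_add ψ (M r) (N r)
  map_smul' c M := by
    rw [RingHom.id_apply, smul_eq_mul, ← smul_eq_mul, ← map_smul]
    congr 1
    funext r
    exact map_smul ψ c (M r)

theorem Module.Dual.evalMatrix_vecMulVec (φ ψ : Dual K (n → K)) (u v : n → K) :
    evalMatrix φ ψ (vecMulVec u v) = φ u * ψ v := by
  have hrows : (fun r => ψ (vecMulVec u v r)) = ψ v • u := by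
    funext r
    have hrow : vecMulVec u v r = u r • v := by
      ext c
      rw [vecMulVec_apply, Pi.smul_apply, smul_eq_mul]
    rw [hrow, map_smul, Pi.smul_apply, smul_eq_mul, smul_eq_mul, mul_comm]
  change φ (fun r => ψ (vecMulVec u v r)) = _
  rw [hrows, map_smul, smul_eq_mul, mul_comm]

theorem LinearIndependent.sym2_symVecMulVec [NeZero (2 : K)] {w : ι → n → K}
    (hw : LinearIndependent K w) :
    LinearIndependent K
      (Sym2.lift ⟨fun a b => symVecMulVec (w a) (w b), fun _ _ => symVecMulVec_comm _ _⟩) := by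
  classical
  obtain ⟨φ, hφ⟩ := hw.exists_dual
  set M := Sym2.lift ⟨fun a b => symVecMulVec (w a) (w b), fun _ _ => symVecMulVec_comm _ _⟩
  let Ψ (s : Sym2 ι) : Dual K (Matrix n n K) := Dual.evalMatrix (φ s.out.1) (φ s.out.2)
  have hΨ (s : Sym2 ι) (a b : ι) : Ψ s (M s(a, b)) =
      (if a = s.out.1 ∧ b = s.out.2 then 1 else 0) +
        (if b = s.out.1 ∧ a = s.out.2 then 1 else 0) := by
    simp only [M, Ψ, Sym2.lift_mk, symVecMulVec, map_add, Dual.evalMatrix_vecMulVec, hφ,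
      ite_and, ite_mul, one_mul, zero_mul]
  have hs (s : Sym2 ι) : s(s.out.1, s.out.2) = s := Quot.out_eq s
  -- `Ψ s (M s)` is `2` when `s` is a diagonal pair, `1` otherwise.
  have hΨ_self (s : Sym2 ι) : Ψ s (M s) ≠ 0 := by
    conv => enter [1, 2]; rw [← hs s]
    rw [hΨ, if_pos ⟨rfl, rfl⟩]
    split_ifs
    · rw [one_add_one_eq_two]
      exact two_ne_zero
    · rw [add_zero]
      exact one_ne_zero
  refine .of_pairwise_dual_eq_zero_one M (fun s => (Ψ s (M s))⁻¹ • Ψ s) (fun s t hst => ?_)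
    (fun s => inv_mul_cancel₀ (hΨ_self s))
  induction t using Sym2.inductionOn with
  | _ a b =>
    rw [LinearMap.smul_apply, hΨ, smul_eq_mul, mul_eq_zero]
    right
    split_ifs with h₁ h₂ h₂
    · exact absurd (by rw [h₁.1, h₁.2, hs]) hst
    · exact absurd (by rw [h₁.1, h₁.2, hs]) hst
    · exact absurd (by rw [h₂.1, h₂.2, Sym2.eq_swap, hs]) hst
    · exact add_zero 0

theorem card_le_finrank_range_add_one {U : Type*} [AddCommGroup U] [Module K U] [Fintype ι]
    [DecidableEq ι] (σ : U →ₗ[K] ι → K) (i : ι)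
    (h : ∀ f : Dual K (ι → K), f ∘ₗ σ = 0 → f (Pi.single i 1) = 0 → f = 0) :
    Fintype.card ι ≤ finrank K (LinearMap.range σ) + 1 := by
  have hker : finrank K (LinearMap.ker σ.dualMap) ≤ 1 := by
    let ev : LinearMap.ker σ.dualMap →ₗ[K] K :=
      Dual.eval K (ι → K) (Pi.single i 1) ∘ₗ (LinearMap.ker σ.dualMap).subtype
    have hev : Function.Injective ev := by
      rw [injective_iff_map_eq_zero]
      exact fun f hf => Subtype.ext (h f.1 f.2 hf)
    exact (LinearMap.finrank_le_finrank_of_injective hev).trans (finrank_self K).le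
  have hdual := σ.dualMap.finrank_range_add_finrank_ker
  rw [Subspace.dual_finrank_eq, finrank_fintype_fun_eq_card,
    LinearMap.finrank_range_dualMap_eq_finrank_range] at hdual
  omega

end LinearAlgebra

section SymKer

variable {R W : Type*} [CommRing R] [Fintype W]

def symKer (B : Matrix W W R) : Submodule R (Matrix W W R) where
  carrier := {X | X.IsSymm ∧ B * X = 0}
  add_mem' := fun ⟨h1, h2⟩ ⟨g1, g2⟩ =>
    ⟨h1.add g1, by rw [Matrix.mul_add, h2, g2, add_zero]⟩
  zero_mem' := ⟨Matrix.isSymm_zero, Matrix.mul_zero B⟩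
  smul_mem' c _ := fun ⟨h1, h2⟩ => ⟨h1.smul c, by rw [Matrix.mul_smul, h2, smul_zero]⟩

theorem symVecMulVec_mem_symKer {B : Matrix W W R} {u v : W → R} (hu : B *ᵥ u = 0)
    (hv : B *ᵥ v = 0) : symVecMulVec u v ∈ symKer B := by
  refine ⟨?_, ?_⟩
  · rw [Matrix.IsSymm, symVecMulVec, Matrix.transpose_add, Matrix.transpose_vecMulVec,
      Matrix.transpose_vecMulVec, add_comm]
  · rw [symVecMulVec, Matrix.mul_add, Matrix.mul_vecMulVec, Matrix.mul_vecMulVec, hu, hv,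
      Matrix.zero_vecMulVec, Matrix.zero_vecMulVec, add_zero]

end SymKer

theorem choose_two_nullity_le_finrank_symKer {W : Type*} [Fintype W] (B : Matrix W W ℝ) :
    (nullity B + 1) * nullity B / 2 ≤ finrank ℝ (symKer B) := by
  let bK := Module.finBasis ℝ (LinearMap.ker B.mulVecLin)
  let w := (LinearMap.ker B.mulVecLin).subtype ∘ bK
  have hw : LinearIndependent ℝ w :=
    bK.linearIndependent.map' _ (LinearMap.ker B.mulVecLin).ker_subtype
  set M : Sym2 (Fin (nullity B)) → Matrix W W ℝ :=
    Sym2.lift ⟨fun a b => symVecMulVec (w a) (w b), fun _ _ => symVecMulVec_comm _ _⟩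
  have hM (s : Sym2 (Fin (nullity B))) : M s ∈ symKer B := by
    induction s using Sym2.inductionOn with
    | _ a b => exact symVecMulVec_mem_symKer (bK a).2 (bK b).2
  calc (nullity B + 1) * nullity B / 2 = Fintype.card (Sym2 (Fin (nullity B))) := by
        rw [Sym2.card, Fintype.card_fin, Nat.choose_two_right, Nat.add_sub_cancel]
    _ = finrank ℝ (Submodule.span ℝ (Set.range M)) :=
        (finrank_span_eq_card hw.sym2_symVecMulVec).symm
    _ ≤ finrank ℝ (symKer B) :=
        Submodule.finrank_mono (Submodule.span_le.mpr (Set.range_subset_iff.mpr hM))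

section GraphPattern

variable {W : Type*} {H : SimpleGraph W} {B : Matrix W W ℝ}

theorem InS.apply_eq_zero (hB : InS H B) {p q : W} (hpq : p ≠ q) (h : ¬H.Adj p q) :
    B p q = 0 :=
  not_not.mp fun hne => h ((hB.2 p q hpq).mp hne)

variable [Fintype W]

theorem InS.mulVec_indicator_eq_zero (hB : InS H B) {C : Set W}
    (hC : ∀ r s, H.Adj r s → r ∈ C → s ∈ C) {u : W → ℝ} (hu : B *ᵥ u = 0) :
    B *ᵥ C.indicator u = 0 := by
  have hcut {r s : W} (hr : r ∈ C) (hs : s ∉ C) : B r s = 0 ∧ B s r = 0 := by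
    have hrs : r ≠ s := by rintro rfl; exact hs hr
    have hB0 : B r s = 0 := hB.apply_eq_zero hrs fun h => hs (hC r s h hr)
    exact ⟨hB0, by rw [hB.1.apply r s, hB0]⟩
  funext r
  have hur := congrFun hu r
  simp only [Matrix.mulVec, dotProduct, Pi.zero_apply] at hur ⊢
  by_cases hr : r ∈ C
  · rw [← hur]
    refine Finset.sum_congr rfl fun s _ => ?_
    by_cases hs : s ∈ C
    · rw [Set.indicator_of_mem hs]
    · rw [Set.indicator_of_notMem hs, (hcut hr hs).1, zero_mul, zero_mul]
  · refine Finset.sum_eq_zero fun s _ => ?_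
    by_cases hs : s ∈ C
    · rw [(hcut hs hr).2, zero_mul]
    · rw [Set.indicator_of_notMem hs, mul_zero]

theorem InS.eq_zero_of_hasSAP (hB : InS H B) (hsap : HasSAP B) {X : Matrix W W ℝ}
    (hX : X ∈ symKer B) (hE : ∀ p q, H.Adj p q → X p q = 0) (hD : ∀ p, X p p = 0) :
    X = 0 := by
  refine hsap X hX.1 (fun j k => ?_) hD hX.2
  by_cases hjk : j = k
  · rw [hjk, hD, mul_zero]
  by_cases hadj : H.Adj j k
  · rw [hE j k hadj, mul_zero]
  · rw [hB.apply_eq_zero hjk hadj, zero_mul]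

theorem InS.reachable_of_hasSAP (hB : InS H B) (hsap : HasSAP B) {u v : W → ℝ}
    (hu : B *ᵥ u = 0) (hv : B *ᵥ v = 0) {p q : W} (hup : u p ≠ 0) (hvq : v q ≠ 0) :
    H.Reachable p q := by
  by_contra hpq
  let Cp := {r | H.Reachable p r}
  let Cq := {r | H.Reachable q r}
  have hclosed (x : W) (r s : W) (hrs : H.Adj r s) (hr : H.Reachable x r) : H.Reachable x s :=
    hr.trans hrs.reachable
  set u' := Cp.indicator u
  set v' := Cq.indicator v
  have hsep {r s : W} (hrs : r = s ∨ H.Adj r s) : u' r * v' s = 0 := by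
    by_contra h
    have hr : r ∈ Cp := Set.mem_of_indicator_ne_zero (left_ne_zero_of_mul h)
    have hs : s ∈ Cq := Set.mem_of_indicator_ne_zero (right_ne_zero_of_mul h)
    rcases hrs with rfl | hrs
    · exact hpq (hr.trans hs.symm)
    · exact hpq ((hr.trans hrs.reachable).trans hs.symm)
  have hX0 : symVecMulVec u' v' = 0 := by
    refine hB.eq_zero_of_hasSAP hsap (symVecMulVec_mem_symKer
      (hB.mulVec_indicator_eq_zero (hclosed p) hu) (hB.mulVec_indicator_eq_zero (hclosed q) hv))
      (fun j k hjk => ?_) (fun j => ?_)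
    · simp only [symVecMulVec, Matrix.add_apply, vecMulVec_apply, hsep (Or.inr hjk),
        mul_comm (v' j), hsep (Or.inr hjk.symm), add_zero]
    · simp only [symVecMulVec, Matrix.add_apply, vecMulVec_apply, mul_comm (v' j),
        hsep (Or.inl rfl), add_zero]
  have hu'p : u' p = u p := Set.indicator_of_mem (show p ∈ Cp from .refl p) u
  have hv'q : v' q = v q := Set.indicator_of_mem (show q ∈ Cq from .refl q) v
  have hv'p : v' p = 0 := Set.indicator_of_notMem (show p ∉ Cq from fun h => hpq h.symm) v
  have hXpq := congrFun (congrFun hX0 p) q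
  rw [symVecMulVec, Matrix.add_apply, vecMulVec_apply, vecMulVec_apply, hu'p, hv'q, hv'p,
    zero_mul, add_zero, Matrix.zero_apply] at hXpq
  exact mul_ne_zero hup hvq hXpq

end GraphPattern

section EdgeCoordinates

variable {R W : Type*} [CommRing R] (H : SimpleGraph W)

/-- `Sym2.out` orders the endpoints of each edge arbitrarily; for symmetric `X` the choice does
not matter (`edgeMatrix_edgeEval`). -/
noncomputable def edgeEval : Matrix W W R →ₗ[R] H.edgeSet → R where
  toFun X e := X (e : Sym2 W).out.1 (e : Sym2 W).out.2
  map_add' _ _ := rfl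
  map_smul' _ _ := rfl

def edgeMatrix [DecidableRel H.Adj] : (H.edgeSet → R) →ₗ[R] Matrix W W R where
  toFun y := Matrix.of fun p q => if h : H.Adj p q then y ⟨s(p, q), h⟩ else 0
  map_add' y z := by ext p q; by_cases h : H.Adj p q <;> simp [h]
  map_smul' c y := by ext p q; by_cases h : H.Adj p q <;> simp [h]

theorem edgeMatrix_edgeEval [DecidableRel H.Adj] {X : Matrix W W R} (hX : X.IsSymm) :
    edgeMatrix H (edgeEval H X) = H.adjMatrix R ⊙ X := by
  ext p q
  by_cases h : H.Adj p q
  · have hout : s((s(p, q)).out.1, (s(p, q)).out.2) = s(p, q) := Quot.out_eq _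
    simp only [edgeMatrix, LinearMap.coe_mk, AddHom.coe_mk, Matrix.of_apply, dif_pos h,
      Matrix.hadamard_apply, SimpleGraph.adjMatrix_apply, if_pos h, one_mul]
    change X (s(p, q)).out.1 (s(p, q)).out.2 = X p q
    rcases Sym2.eq_iff.mp hout with ⟨h1, h2⟩ | ⟨h1, h2⟩
    · rw [h1, h2]
    · rw [h1, h2, hX.apply]
  · simp [edgeMatrix, h]

def diagOn (S : Set W) : Matrix W W R →ₗ[R] S → R where
  toFun X p := X p p
  map_add' _ _ := rfl
  map_smul' _ _ := rfl

end EdgeCoordinates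

section Constraints

variable {W : Type*} [Fintype W] {H : SimpleGraph W} {B : Matrix W W ℝ}

def kerSupportZeroDiag (B : Matrix W W ℝ) : Set W :=
  {p | B p p = 0 ∧ ∃ u, B *ᵥ u = 0 ∧ u p ≠ 0}

theorem InS.diag_eq_zero_of_notMem (hB : InS H B) {X : Matrix W W ℝ} (hX : X ∈ symKer B)
    (hE : ∀ p q, H.Adj p q → X p q = 0) {p : W} (hp : p ∉ kerSupportZeroDiag B) :
    X p p = 0 := by
  have hcol : B *ᵥ (fun r => X r p) = 0 := funext fun r => congrFun (congrFun hX.2 r) p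
  have hcolp : (B *ᵥ fun r => X r p) p = B p p * X p p := by
    refine Finset.sum_eq_single p (fun s _ hsp => ?_) (by simp)
    dsimp only
    by_cases hadj : H.Adj s p
    · rw [hE s p hadj, mul_zero]
    · rw [hB.apply_eq_zero (Ne.symm hsp) fun h => hadj h.symm, zero_mul]
  by_cases hBpp : B p p = 0
  · by_contra h
    exact hp ⟨hBpp, _, hcol, h⟩
  · rw [hcol] at hcolp
    exact (mul_eq_zero.mp hcolp.symm).resolve_left hBpp

theorem InS.mul_hadamard_adjMatrix_apply_self [DecidableRel H.Adj] (hB : InS H B)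
    (X : Matrix W W ℝ) {p : W} (hp : B p p = 0) :
    (B * (H.adjMatrix ℝ ⊙ X)) p p = (B * X) p p := by
  refine Finset.sum_congr rfl fun s _ => ?_
  dsimp only
  rw [Matrix.hadamard_apply, SimpleGraph.adjMatrix_apply]
  split_ifs with hadj
  · rw [one_mul]
  by_cases hsp : s = p
  · rw [hsp, hp, zero_mul, zero_mul]
  · rw [hB.apply_eq_zero (Ne.symm hsp) fun h => hadj h.symm, zero_mul, zero_mul]

variable (H B) in
noncomputable def edgeDiagConstraint [DecidableRel H.Adj] :
    (H.edgeSet → ℝ) →ₗ[ℝ] kerSupportZeroDiag B → ℝ :=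
  diagOn _ ∘ₗ LinearMap.mulLeft ℝ B ∘ₗ edgeMatrix H

theorem edgeDiagConstraint_apply [DecidableRel H.Adj] (y : H.edgeSet → ℝ)
    (p : kerSupportZeroDiag B) : edgeDiagConstraint H B y p = (B * edgeMatrix H y) p p :=
  rfl

theorem InS.edgeEval_mem_ker [DecidableRel H.Adj] (hB : InS H B) {X : Matrix W W ℝ}
    (hX : X ∈ symKer B) : edgeEval H X ∈ LinearMap.ker (edgeDiagConstraint H B) := by
  ext ⟨p, hp⟩
  rw [edgeDiagConstraint_apply, edgeMatrix_edgeEval H hX.1,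
    hB.mul_hadamard_adjMatrix_apply_self X hp.1, hX.2]
  rfl

theorem InS.edgeDiagConstraint_edgeEval_single_add_single [DecidableEq W] [DecidableRel H.Adj]
    (hB : InS H B) {a b : W} (hab : H.Adj a b) :
    edgeDiagConstraint H B (edgeEval H (Matrix.single a b 1 + Matrix.single b a 1)) =
      fun p : kerSupportZeroDiag B =>
        B a b * ((if (p : W) = a then 1 else 0) + (if (p : W) = b then 1 else 0)) := by
  set Y : Matrix W W ℝ := Matrix.single a b 1 + Matrix.single b a 1
  have hY : Y.IsSymm := by
    rw [Matrix.IsSymm, Matrix.transpose_add, Matrix.transpose_single, Matrix.transpose_single,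
      add_comm]
  have hmask : H.adjMatrix ℝ ⊙ Y = Y := by
    ext p q
    rw [Matrix.hadamard_apply, SimpleGraph.adjMatrix_apply]
    split_ifs with hpq
    · rw [one_mul]
    · have hp : ¬(a = p ∧ b = q) := by rintro ⟨rfl, rfl⟩; exact hpq hab
      have hq : ¬(b = p ∧ a = q) := by rintro ⟨rfl, rfl⟩; exact hpq hab.symm
      simp [Y, hp, hq]
  funext p
  rw [edgeDiagConstraint_apply, edgeMatrix_edgeEval H hY, hmask, Matrix.mul_add, Matrix.add_apply]
  by_cases hpa : (p : W) = a
  · simp [hpa, hab.ne]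
  · by_cases hpb : (p : W) = b
    · simp [hpb, hab.ne.symm, hB.1.apply a b]
    · simp [hpa, hpb]

theorem InS.eq_zero_of_dual_comp_edgeDiagConstraint [DecidableEq W] [DecidableRel H.Adj]
    (hB : InS H B) (hsap : HasSAP B) {p₀ : W} (hp₀ : p₀ ∈ kerSupportZeroDiag B)
    (f : Dual ℝ (kerSupportZeroDiag B → ℝ)) (hf : f ∘ₗ edgeDiagConstraint H B = 0)
    (hf₀ : f (Pi.single ⟨p₀, hp₀⟩ 1) = 0) : f = 0 := by
  classical
  -- `μ a` is the coefficient of `f` at `a`, zero off `kerSupportZeroDiag B`. It changes sign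
  -- along edges, so it vanishes on the component of `p₀`, which contains that whole set.
  let χ (a : W) : kerSupportZeroDiag B → ℝ := fun p => if (p : W) = a then 1 else 0
  let μ (a : W) := f (χ a)
  have hμ_adj {a b : W} (hab : H.Adj a b) : μ a + μ b = 0 := by
    let Y : Matrix W W ℝ := Matrix.single a b 1 + Matrix.single b a 1
    have hσY : edgeDiagConstraint H B (edgeEval H Y) = B a b • (χ a + χ b) :=
      hB.edgeDiagConstraint_edgeEval_single_add_single hab
    have hfY := LinearMap.congr_fun hf (edgeEval H Y)
    rw [LinearMap.comp_apply, hσY, map_smul, map_add, LinearMap.zero_apply, smul_eq_mul] at hfY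
    exact (mul_eq_zero.mp hfY).resolve_left ((hB.2 a b hab.ne).mpr hab)
  have hμ_walk {u v : W} (w : H.Walk u v) (hu : μ u = 0) : μ v = 0 := by
    induction w with
    | nil => exact hu
    | cons hadj _ ih => exact ih (by linarith [hμ_adj hadj])
  have hμ₀ : μ p₀ = 0 := by
    convert hf₀ using 2
    funext p
    simp [χ, Pi.single_apply, Subtype.ext_iff]
  have hμ (p : kerSupportZeroDiag B) : μ p = 0 := by
    obtain ⟨u, hu, hup⟩ := hp₀.2
    obtain ⟨v, hv, hvp⟩ := p.2.2
    exact hμ_walk (hB.reachable_of_hasSAP hsap hu hv hup hvp).some hμ₀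
  refine LinearMap.ext fun x => ?_
  rw [LinearMap.pi_apply_eq_sum_univ f x, LinearMap.zero_apply]
  refine Finset.sum_eq_zero fun p _ => ?_
  have hχ : (fun q => if p = q then (1 : ℝ) else 0) = χ p := by
    funext q
    simp [χ, Subtype.ext_iff, eq_comm]
  rw [hχ]
  exact smul_eq_zero_of_right _ (hμ p)

theorem InS.finrank_symKer_le (hB : InS H B) (hsap : HasSAP B) :
    finrank ℝ (symKer B) ≤ H.edgeSet.ncard + 1 := by
  classical
  let σ := edgeDiagConstraint H B
  let Ψ : symKer B →ₗ[ℝ] LinearMap.ker σ × (kerSupportZeroDiag B → ℝ) :=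
    ((edgeEval H ∘ₗ (symKer B).subtype).codRestrict _ fun X => hB.edgeEval_mem_ker X.2).prod
      (diagOn _ ∘ₗ (symKer B).subtype)
  have hΨ : Function.Injective Ψ := by
    rw [injective_iff_map_eq_zero]
    rintro ⟨X, hX⟩ h
    have hE : edgeEval H X = 0 := congrArg Subtype.val (congrArg Prod.fst h)
    have hD : diagOn _ X = 0 := congrArg Prod.snd h
    have hadj (p q : W) (hpq : H.Adj p q) : X p q = 0 := by
      simpa [hpq, hE] using (congrFun (congrFun (edgeMatrix_edgeEval H hX.1) p) q).symm
    refine Subtype.ext (hB.eq_zero_of_hasSAP hsap hX hadj fun p => ?_)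
    by_cases hp : p ∈ kerSupportZeroDiag B
    · exact congrFun hD ⟨p, hp⟩
    · exact hB.diag_eq_zero_of_notMem hX hadj hp
  have hdim := LinearMap.finrank_le_finrank_of_injective hΨ
  rw [Module.finrank_prod, finrank_fintype_fun_eq_card] at hdim
  have hrank := σ.finrank_range_add_finrank_ker
  rw [finrank_fintype_fun_eq_card, ← Nat.card_eq_fintype_card, Nat.card_coe_set_eq] at hrank
  have hZ : Fintype.card (kerSupportZeroDiag B) ≤ finrank ℝ (LinearMap.range σ) + 1 := by
    rcases isEmpty_or_nonempty (kerSupportZeroDiag B) with hZ | ⟨⟨p₀, hp₀⟩⟩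
    · simp [Fintype.card_eq_zero]
    · exact card_le_finrank_range_add_one σ ⟨p₀, hp₀⟩
        (hB.eq_zero_of_dual_comp_edgeDiagConstraint hsap hp₀)
  omega

end Constraints

theorem InS.delRC {W : Type*} {G : SimpleGraph W} {A : Matrix W W ℝ} (hA : InS G A) (i : W) :
    InS (G.comap (Subtype.val : {x // x ≠ i} → W)) (delRC A i) :=
  ⟨hA.1.submatrix _, fun j k hjk => hA.2 j k (Subtype.coe_ne_coe.mpr hjk)⟩

theorem HasSNIP.hasSAP_delRC {W : Type*} [Fintype W] [DecidableEq W] {A : Matrix W W ℝ} {i : W}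
    (h : HasSNIP A i) : HasSAP (delRC A i) := by
  intro X hX hAX hXdiag hBX
  let Y : Matrix W W ℝ := fun j k =>
    if hj : j = i then 0 else if hk : k = i then 0 else X ⟨j, hj⟩ ⟨k, hk⟩
  have hY (j k : {x // x ≠ i}) : Y j k = X j k := by simp [Y, j.2, k.2]
  have hYi (j : W) : Y j i = 0 := by simp [Y]
  have hiY (k : W) : Y i k = 0 := by simp [Y]
  suffices Y = 0 by
    ext j k
    rw [← hY, this, Matrix.zero_apply, Matrix.zero_apply]
  refine h Y ?_ (fun j k => ?_) (fun j => ?_) (fun j k hj => ?_)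
  · ext j k
    by_cases hj : j = i
    · rw [Matrix.transpose_apply, hj, hYi, hiY]
    by_cases hk : k = i
    · rw [Matrix.transpose_apply, hk, hYi, hiY]
    rw [Matrix.transpose_apply, hY ⟨k, hk⟩ ⟨j, hj⟩, hY ⟨j, hj⟩ ⟨k, hk⟩, hX.apply]
  · by_cases hj : j = i
    · rw [hj, hiY, mul_zero]
    by_cases hk : k = i
    · rw [hk, hYi, mul_zero]
    exact (hY ⟨j, hj⟩ ⟨k, hk⟩).symm ▸ hAX ⟨j, hj⟩ ⟨k, hk⟩
  · by_cases hj : j = i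
    · rw [hj, hiY]
    exact (hY ⟨j, hj⟩ ⟨j, hj⟩).trans (hXdiag _)
  · by_cases hk : k = i
    · rw [hk]
      exact Finset.sum_eq_zero fun m _ => mul_eq_zero_of_right _ (hYi m)
    rw [Matrix.mul_apply, Fintype.sum_eq_add_sum_subtype_ne _ i, hiY, mul_zero, zero_add]
    simp only [hY _ ⟨k, hk⟩]
    exact congrFun (congrFun hBX ⟨j, hj⟩) ⟨k, hk⟩

theorem stmt15_general (G : SimpleGraph V) (i : V) (k ℓ : ℕ)
    (h : ∃ A : Matrix V V ℝ, InS G A ∧ HasSNIP A i ∧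
      nullity A = k ∧ nullity (delRC A i) = ℓ) :
    (ℓ + 1) * ℓ / 2 ≤ (G.comap (Subtype.val : {x // x ≠ i} → V)).edgeSet.ncard + 1 := by
  obtain ⟨A, hA, hsnip, -, rfl⟩ := h
  exact (choose_two_nullity_le_finrank_symKer _).trans
    ((hA.delRC i).finrank_symKer_le hsnip.hasSAP_delRC)

theorem stmt15 (G : SimpleGraph V) (i : V) (k ℓ : ℕ) (hkl : k < ℓ)
    (h : ∃ A : Matrix V V ℝ, InS G A ∧ HasSNIP A i ∧
      nullity A = k ∧ nullity (delRC A i) = ℓ) :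
    (ℓ + 1) * ℓ / 2 ≤ (G.comap (Subtype.val : {x // x ≠ i} → V)).edgeSet.ncard + 1 :=
  stmt15_general G i k ℓ h
end

section
/- Let (G,i) be a rooted graph on n vertices and let Ḡ be the complement graph of G. Then, as real numbers, ξξ(G,i) + ξξ(Ḡ,i) ≤ 2√2·n. -/
/-!
Let `A ∈ S(G)` have the `i`-SNIP and let `ℓ = null(A(i))`. Extending a basis of `ker A(i)` by a
zero `i`-th coordinate gives the independent rows of an `ℓ × n` matrix `U` with `(AUᵀ)ⱼ = 0` for
`j ≠ i`. For a symmetric `ℓ × ℓ` matrix `C`, `X = UᵀCU` is symmetric, vanishes in row and column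
`i`, and has `(AX)ⱼₖ = 0` for `j ≠ i`; if it also vanishes on the diagonal and on the edges of
`G - i`, then `A ∘ X = O`, so the `i`-SNIP gives `X = O`, hence `C = O`. Counting dimensions,
`ℓ(ℓ+1)/2 ≤ (n - 1) + |E(G - i)|`, while `ξξ(G,i) ≤ 2ℓ` for a maximising `A`. Adding this for
`G` and `Ḡ`, whose edge counts off `i` sum to `(n-1)(n-2)/2`, gives
`ℓ₁(ℓ₁+1) + ℓ₂(ℓ₂+1) ≤ (n-1)(n+2)`, which forces `ℓ₁ + ℓ₂ ≤ √2 n`.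
-/

open Matrix

variable {V : Type*} [Fintype V] [DecidableEq V]

namespace Matrix

section

variable {K : Type*} [Field K] {l m n : Type*} [Fintype m]

lemma eq_zero_of_mul_eq_zero_of_linearIndependent_row {U : Matrix m n K}
    (hU : LinearIndependent K U.row) {B : Matrix l m K} (h : B * U = 0) : B = 0 :=
  ext_row fun a => vecMul_injective_iff.2 hU (by
    show B a ᵥ* U = (0 : m → K) ᵥ* U
    rw [zero_vecMul]
    exact congr_fun h a)

lemma eq_zero_of_transpose_mul_mul_eq_zero {U : Matrix m n K} (hU : LinearIndependent K U.row)
    {C : Matrix m m K} (h : Uᵀ * C * U = 0) : C = 0 := by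
  have hUC : Uᵀ * C = 0 := eq_zero_of_mul_eq_zero_of_linearIndependent_row hU h
  have hCt : Cᵀ * U = 0 := by
    rw [← transpose_transpose U, ← transpose_mul, hUC, transpose_zero]
  simpa using congr(($(eq_zero_of_mul_eq_zero_of_linearIndependent_row hU hCt))ᵀ)

end

def ofSym2 {ι R : Type*} [Semiring R] : (Sym2 ι → R) →ₗ[R] Matrix ι ι R where
  toFun f := of fun a c => f s(a, c)
  map_add' _ _ := rfl
  map_smul' _ _ := rfl

lemma ofSym2_injective {ι R : Type*} [Semiring R] :
    Function.Injective (ofSym2 : (Sym2 ι → R) →ₗ[R] Matrix ι ι R) := by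
  intro f g h
  funext e
  induction e with
  | _ a c => exact congr_fun₂ h a c

lemma isSymm_ofSym2 {ι R : Type*} [Semiring R] (f : Sym2 ι → R) : (ofSym2 f).IsSymm :=
  IsSymm.ext fun _ _ => congrArg f Sym2.eq_swap

lemma transpose_mul_mul_apply_eq_zero {R ι n : Type*} [CommSemiring R] [Fintype ι]
    {U : Matrix ι n R} {i : n} (hUi : ∀ a, U a i = 0) (C : Matrix ι ι R) (j : n) :
    (Uᵀ * C * U) j i = 0 ∧ (Uᵀ * C * U) i j = 0 := by
  simp [mul_apply, hUi]

lemma IsSymm.transpose_mul_mul_s16 {R ι n : Type*} [CommSemiring R] [Fintype ι]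
    {C : Matrix ι ι R} (hC : C.IsSymm) (U : Matrix ι n R) : (Uᵀ * C * U).IsSymm := by
  simp [IsSymm, transpose_mul, hC.eq, Matrix.mul_assoc]

end Matrix

lemma SimpleGraph.comap_compl {V W : Type*} {f : V → W} (hf : Function.Injective f)
    (G : SimpleGraph W) : Gᶜ.comap f = (G.comap f)ᶜ := by
  ext a b
  simp [hf.ne_iff]

lemma SimpleGraph.ncard_edgeSet_add_ncard_edgeSet_compl {V : Type*} [Fintype V]
    (G : SimpleGraph V) : G.edgeSet.ncard + Gᶜ.edgeSet.ncard = (Fintype.card V).choose 2 := by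
  classical
  have hdisj : Disjoint G.edgeSet Gᶜ.edgeSet := by
    rw [Set.disjoint_iff_inter_eq_empty, ← edgeSet_inf, inf_compl_eq_bot, edgeSet_bot]
  rw [← Set.ncard_union_eq hdisj (Set.toFinite _) (Set.toFinite _),
    ← edgeSet_sup, sup_compl_eq_top, Set.ncard_eq_toFinset_card', ← edgeFinset,
    card_edgeFinset_top_eq_card_choose_two]

lemma mulVec_extend_val_apply (A : Matrix V V ℝ) (i : V) (w : {j // j ≠ i} → ℝ)
    (j : {j // j ≠ i}) : (A *ᵥ Function.extend Subtype.val w 0) j = (delRC A i *ᵥ w) j := by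
  simp [mulVec, dotProduct, Fintype.sum_eq_add_sum_subtype_ne _ i, delRC]

lemma exists_linearIndependent_row_of_nullity_delRC (A : Matrix V V ℝ) (i : V) :
    ∃ U : Matrix (Fin (nullity (delRC A i))) V ℝ, LinearIndependent ℝ U.row ∧
      (∀ a, U a i = 0) ∧ ∀ j, j ≠ i → ∀ a, (A * Uᵀ) j a = 0 := by
  let K := LinearMap.ker (delRC A i).mulVecLin
  let b : Module.Basis (Fin (nullity (delRC A i))) ℝ K := Module.finBasis ℝ K
  let ext := Function.ExtendByZero.linearMap ℝ (Subtype.val : {j // j ≠ i} → V)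
  refine ⟨fun a => ext (b a), ?_, fun a => ?_, fun j hj a => ?_⟩
  · exact b.linearIndependent.map' (ext ∘ₗ K.subtype) <| LinearMap.ker_eq_bot.2 <|
      (Function.extend_injective Subtype.val_injective (0 : V → ℝ)).comp Subtype.val_injective
  · exact Function.extend_apply' _ _ _ fun ⟨k, hk⟩ => k.2 hk
  · have hb : delRC A i *ᵥ (b a : {j // j ≠ i} → ℝ) = 0 := (b a).2
    show (A *ᵥ Function.extend Subtype.val (b a : {j // j ≠ i} → ℝ) 0) j = 0
    rw [mulVec_extend_val_apply A i _ ⟨j, hj⟩, hb, Pi.zero_apply]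

lemma HasSNIP.transpose_mul_mul_eq_zero {ι : Type*} [Fintype ι] {G : SimpleGraph V}
    {A : Matrix V V ℝ} {i : V} (hA : HasSNIP A i) (hS : InS G A) {U : Matrix ι V ℝ}
    (hUi : ∀ a, U a i = 0) (hAU : ∀ j, j ≠ i → ∀ a, (A * Uᵀ) j a = 0) {C : Matrix ι ι ℝ}
    (hC : C.IsSymm) (hdiag : ∀ j, j ≠ i → (Uᵀ * C * U) j j = 0)
    (hedge : ∀ j k, j ≠ i → k ≠ i → G.Adj j k → (Uᵀ * C * U) j k = 0) :
    Uᵀ * C * U = 0 := by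
  have hroot := transpose_mul_mul_apply_eq_zero hUi C
  set X := Uᵀ * C * U with hX
  have hdiag' : ∀ j, X j j = 0 := fun j => by
    by_cases hj : j = i
    · exact hj ▸ (hroot i).1
    · exact hdiag j hj
  refine hA X ?_ (fun j k => ?_) hdiag' (fun j k hj => ?_)
  · exact hC.transpose_mul_mul_s16 U
  · by_cases hjk : j = k
    · simp [hjk, hdiag']
    by_cases hj : j = i
    · simp [hj, (hroot k).2]
    by_cases hk : k = i
    · simp [hk, (hroot j).1]
    by_cases hAjk : A j k = 0
    · simp [hAjk]
    · simp [hedge j k hj hk ((hS.2 j k hjk).1 hAjk)]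
  · calc (A * X) j k = ((A * Uᵀ) * (C * U)) j k := by simp only [hX, Matrix.mul_assoc]
      _ = 0 := by simp only [mul_apply (M := A * Uᵀ), hAU j hj, zero_mul, Finset.sum_const_zero]

/-- The diagonal entries off `i` and the entries on the edges of `G - i`. An edge `e` is read at
its representative `e.out`, which loses nothing on symmetric matrices. -/
noncomputable def offRootEntries (G : SimpleGraph V) (i : V) : Matrix V V ℝ →ₗ[ℝ]
    ({j // j ≠ i} → ℝ) × ((G.comap (Subtype.val : {j // j ≠ i} → V)).edgeSet → ℝ) :=
  (LinearMap.pi fun j => entryLinearMap ℝ ℝ j.1 j.1).prod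
    (LinearMap.pi fun e => entryLinearMap ℝ ℝ e.1.out.1.1 e.1.out.2.1)

omit [Fintype V] [DecidableEq V] in
lemma eq_zero_of_offRootEntries_eq_zero {G : SimpleGraph V} {i : V} {X : Matrix V V ℝ}
    (hX : X.IsSymm) (h : offRootEntries G i X = 0) :
    (∀ j, j ≠ i → X j j = 0) ∧ ∀ j k, j ≠ i → k ≠ i → G.Adj j k → X j k = 0 := by
  refine ⟨fun j hj => congr_fun (congrArg Prod.fst h) ⟨j, hj⟩, fun j k hj hk hjk => ?_⟩
  let e : (G.comap (Subtype.val : {j // j ≠ i} → V)).edgeSet := ⟨s(⟨j, hj⟩, ⟨k, hk⟩), hjk⟩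
  have he : X e.1.out.1 e.1.out.2 = 0 := congr_fun (congrArg Prod.snd h) e
  rcases (Sym2.mk_eq_mk_iff (p := e.1.out) (q := (⟨j, hj⟩, ⟨k, hk⟩))).1 (Quot.out_eq e.1)
    with hp | hp <;> rw [hp] at he
  · exact he
  · exact hX.apply k j ▸ he

lemma choose_two_nullity_delRC_succ_le {G : SimpleGraph V} {A : Matrix V V ℝ} {i : V}
    (hS : InS G A) (hA : HasSNIP A i) :
    (nullity (delRC A i) + 1).choose 2 ≤
      Fintype.card {j // j ≠ i} + (G.comap (Subtype.val : {j // j ≠ i} → V)).edgeSet.ncard := by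
  classical
  obtain ⟨U, hU, hUi, hAU⟩ := exists_linearIndependent_row_of_nullity_delRC A i
  let Φ := offRootEntries G i ∘ₗ mulRightLinearMap V ℝ U ∘ₗ mulLeftLinearMap _ ℝ Uᵀ ∘ₗ ofSym2
  have hΦ : Function.Injective Φ := by
    refine (injective_iff_map_eq_zero Φ).2 fun f hf => ofSym2_injective ?_
    have hC := isSymm_ofSym2 f
    obtain ⟨hdiag, hedge⟩ := eq_zero_of_offRootEntries_eq_zero (hC.transpose_mul_mul_s16 U) hf
    simpa using eq_zero_of_transpose_mul_mul_eq_zero hU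
      (hA.transpose_mul_mul_eq_zero hS hUi hAU hC hdiag hedge)
  simpa [Module.finrank_fintype_fun_eq_card, Sym2.card, Set.ncard_eq_toFinset_card']
    using LinearMap.finrank_le_finrank_of_injective hΦ

omit [DecidableEq V] in
lemma nullity_le_card (A : Matrix V V ℝ) : nullity A ≤ Fintype.card V :=
  (Submodule.finrank_le _).trans_eq (Module.finrank_fintype_fun_eq_card ℝ)

lemma exists_xixi_le_two_mul (G : SimpleGraph V) (i : V) :
    ∃ ℓ : ℕ, xixi G i ≤ 2 * ℓ ∧ (ℓ + 1).choose 2 ≤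
      Fintype.card {j // j ≠ i} + (G.comap (Subtype.val : {j // j ≠ i} → V)).edgeSet.ncard := by
  set S := {s | ∃ k ℓ : ℕ, k ≤ ℓ ∧ s = k + ℓ ∧ ∃ A : Matrix V V ℝ,
    InS G A ∧ HasSNIP A i ∧ nullity A = k ∧ nullity (delRC A i) = ℓ}
  have hxixi : xixi G i = sSup S := rfl
  rcases S.eq_empty_or_nonempty with hS | hS
  · exact ⟨0, by simp [hxixi, hS], by simp⟩
  have hbdd : BddAbove S := by
    refine ⟨2 * Fintype.card V, ?_⟩
    rintro s ⟨k, ℓ, hkℓ, rfl, A, -, -, -, rfl⟩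
    have := (nullity_le_card (delRC A i)).trans (Fintype.card_subtype_le _)
    omega
  obtain ⟨k, ℓ, hkℓ, hs, A, hA, hsnip, -, rfl⟩ := Nat.sSup_mem hS hbdd
  exact ⟨_, by omega, choose_two_nullity_delRC_succ_le hA hsnip⟩

lemma add_le_sqrt_two_mul {x y m : ℝ} (hx : 0 ≤ x) (hy : 0 ≤ y) (hm : 0 ≤ m)
    (h : x * (x + 1) + y * (y + 1) ≤ m * (m + 3)) : x + y ≤ √2 * (m + 1) := by
  have hsq : (x + y) ^ 2 ≤ 2 * (m + 1) ^ 2 := by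
    nlinarith [sq_nonneg (x - y), sq_nonneg (x + y - (m + 1))]
  calc x + y ≤ √(2 * (m + 1) ^ 2) := Real.le_sqrt_of_sq_le hsq
    _ = √2 * (m + 1) := by rw [Real.sqrt_mul zero_le_two, Real.sqrt_sq (by linarith)]

theorem stmt16 (G : SimpleGraph V) (i : V) :
    (xixi G i + xixi Gᶜ i : ℝ) ≤ 2 * Real.sqrt 2 * Fintype.card V := by
  obtain ⟨ℓ₁, hx₁, hℓ₁⟩ := exists_xixi_le_two_mul G i
  obtain ⟨ℓ₂, hx₂, hℓ₂⟩ := exists_xixi_le_two_mul Gᶜ i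
  rw [SimpleGraph.comap_compl Subtype.val_injective] at hℓ₂
  have hE := (G.comap (Subtype.val : {j // j ≠ i} → V)).ncard_edgeSet_add_ncard_edgeSet_compl
  have hcard : Fintype.card V = Fintype.card {j // j ≠ i} + 1 := by
    have := Fintype.card_pos_iff.2 ⟨i⟩
    simp only [ne_eq, Fintype.card_subtype_compl, Fintype.card_unique]
    omega
  have hsum : ((ℓ₁ + 1).choose 2 + (ℓ₂ + 1).choose 2 : ℝ) ≤
      2 * Fintype.card {j // j ≠ i} + (Fintype.card {j // j ≠ i}).choose 2 := by
    exact_mod_cast (add_le_add hℓ₁ hℓ₂).trans_eq (by omega)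
  simp only [Nat.cast_choose_two] at hsum
  push_cast at hsum
  have key := add_le_sqrt_two_mul (Nat.cast_nonneg ℓ₁) (Nat.cast_nonneg ℓ₂)
    (Nat.cast_nonneg (Fintype.card {j // j ≠ i})) (by linarith)
  have hx : (xixi G i + xixi Gᶜ i : ℝ) ≤ 2 * (ℓ₁ + ℓ₂) := by
    exact_mod_cast (add_le_add hx₁ hx₂).trans_eq (by ring)
  rw [hcard, Nat.cast_succ]
  linarith
end
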